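/- arXiv:0709.3120 — 6 statements merged into one kernel-verified Lean document; each statement's English description precedes it below -/
import Mathlib

section
/- Suppose Λ̃ > 0. Then the operator H, defined on the finitely supported sequences in ℓ²(ℤ, ℂ), is essentially self-adjoint; equivalently (by the standard criterion for symmetric operators), both of the sets { (H + i·id)ψ : ψ : ℤ → ℂ finitely supported } and { (H − i·id)ψ : ψ : ℤ → ℂ finitely supported } are dense subsets of ℓ²(ℤ, ℂ). -/
open Filter

lemma aps_decay (c d : ℤ → ℝ) (z : ℂ) (hz : z.re = 0) (φ : ℤ → ℂ)
    (δ : ℝ) (hδ : 0 < δ) (N : ℤ)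
    (hstr : ∀ n : ℤ, N ≤ n → 0 < c n ∧ 0 < c (n-1) ∧ 0 < d n ∧
      (1+δ) * (c n + c (n-1)) ≤ d n)
    (heq : ∀ n : ℤ, ((d n : ℂ) - z) * φ n = (c n : ℂ) * φ (n+1) + (c (n-1) : ℂ) * φ (n-1))
    (htend : Tendsto (fun n : ℤ => ‖φ n‖) atTop (nhds 0)) :
    ∀ k : ℕ, ‖φ (N + k)‖ ≤ ‖φ N‖ * (1/(1+δ))^k := by
  have h1δ : (0:ℝ) < 1 + δ := by linarith
  have habs : ∀ n : ℤ, d n ≤ ‖(d n : ℂ) - z‖ := by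
    intro n
    have h1 : ((d n : ℂ) - z).re = d n - z.re := by simp [Complex.sub_re]
    calc d n ≤ |((d n : ℂ) - z).re| := by rw [h1, hz]; simpa using le_abs_self (d n)
      _ ≤ ‖(d n : ℂ) - z‖ := Complex.abs_re_le_norm _
  have hstep : ∀ n : ℤ, N ≤ n → ‖φ (n-1)‖ ≤ ‖φ n‖ →
      (1+δ) * ‖φ n‖ ≤ ‖φ (n+1)‖ := by
    intro n hn hmono
    obtain ⟨hc, hc', hd, hdom⟩ := hstr n hn
    have e := heq n
    have key : d n * ‖φ n‖ - c (n-1) * ‖φ (n-1)‖ ≤ c n * ‖φ (n+1)‖ := by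
      have h2 : ‖((d n : ℂ) - z) * φ n‖ ≤ ‖(c n : ℂ) * φ (n+1)‖ + ‖(c (n-1) : ℂ) * φ (n-1)‖ := by
        rw [e]; exact norm_add_le _ _
      have h3 : ‖((d n : ℂ) - z) * φ n‖ = ‖(d n : ℂ) - z‖ * ‖φ n‖ := by
        simp [norm_mul]
      have h4 : d n * ‖φ n‖ ≤ ‖(d n : ℂ) - z‖ * ‖φ n‖ :=
        mul_le_mul_of_nonneg_right (habs n) (norm_nonneg _)
      have h5 : ‖(c n : ℂ) * φ (n+1)‖ = c n * ‖φ (n+1)‖ := by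
        simp [norm_mul, Complex.norm_real, abs_of_pos hc]
      have h6 : ‖(c (n-1) : ℂ) * φ (n-1)‖ = c (n-1) * ‖φ (n-1)‖ := by
        simp [norm_mul, Complex.norm_real, abs_of_pos hc']
      rw [h5, h6] at h2; rw [h3] at h2; linarith
    have h7 : c (n-1) * ‖φ (n-1)‖ ≤ c (n-1) * ‖φ n‖ :=
      mul_le_mul_of_nonneg_left hmono (le_of_lt hc')
    have h8 : c n * ((1+δ) * ‖φ n‖) ≤ c n * ‖φ (n+1)‖ := by
      nlinarith [mul_le_mul_of_nonneg_right hdom (norm_nonneg (φ n)),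
        mul_nonneg (mul_nonneg hδ.le hc'.le) (norm_nonneg (φ n))]
    exact le_of_mul_le_mul_left h8 hc
  have hmono : ∀ n : ℤ, N ≤ n → ‖φ (n+1)‖ ≤ ‖φ n‖ := by
    intro n hn
    by_contra hlt
    push_neg at hlt
    have hgrow : ∀ k : ℕ, (1+δ)^k * ‖φ (n+1)‖ ≤ ‖φ (n+1+k)‖ ∧ ‖φ (n+1+k-1)‖ ≤ ‖φ (n+1+k)‖ := by
      intro k
      induction k with
      | zero =>
        refine ⟨?_, ?_⟩
        · simp only [Nat.cast_zero, add_zero, pow_zero, one_mul]; exact le_refl _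
        · simp only [Nat.cast_zero, add_zero, add_sub_cancel_right]; exact hlt.le
      | succ k ih =>
        obtain ⟨ih1, ih2⟩ := ih
        have hk : N ≤ n+1+k := by omega
        have h9 : (1+δ) * ‖φ (n+1+k)‖ ≤ ‖φ (n+1+k+1)‖ := hstep (n+1+k) hk ih2
        have h10 : (n:ℤ)+1+(k+1:ℕ) = n+1+k+1 := by push_cast; ring
        have h11 : (n:ℤ)+1+(k+1:ℕ)-1 = n+1+k := by push_cast; ring
        rw [h10, show (n+1+(k:ℤ)+1-1 : ℤ) = n+1+k from by ring]
        constructor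
        · calc (1+δ)^(k+1) * ‖φ (n+1)‖ = (1+δ) * ((1+δ)^k * ‖φ (n+1)‖) := by ring
            _ ≤ (1+δ) * ‖φ (n+1+k)‖ := mul_le_mul_of_nonneg_left ih1 h1δ.le
            _ ≤ ‖φ (n+1+k+1)‖ := h9
        · nlinarith [norm_nonneg (φ (n+1+(k:ℤ)))]
    have hpos : 0 < ‖φ (n+1)‖ := lt_of_le_of_lt (norm_nonneg _) hlt
    have hbig : ∀ k : ℕ, ‖φ (n+1)‖ ≤ ‖φ (n+1+k)‖ := by
      intro k
      have h12 : (1:ℝ) ≤ (1+δ)^k := one_le_pow₀ (by linarith)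
      calc ‖φ (n+1)‖ = 1 * ‖φ (n+1)‖ := by ring
        _ ≤ (1+δ)^k * ‖φ (n+1)‖ := mul_le_mul_of_nonneg_right h12 (norm_nonneg _)
        _ ≤ ‖φ (n+1+k)‖ := (hgrow k).1
    have htend' : Tendsto (fun k : ℕ => ‖φ (n+1+k)‖) atTop (nhds 0) := by
      apply htend.comp
      exact tendsto_atTop_add_const_left atTop (n+1) tendsto_natCast_atTop_atTop
    have hge : (0:ℝ) ≥ ‖φ (n+1)‖ := ge_of_tendsto htend' (Eventually.of_forall hbig)
    linarith
  have hdec : ∀ n : ℤ, N + 1 ≤ n → (1+δ) * ‖φ n‖ ≤ ‖φ (n-1)‖ := by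
    intro n hn
    obtain ⟨hc, hc', hd, hdom⟩ := hstr n (by omega)
    have e := heq n
    have h2 : ‖(d n : ℂ) - z‖ * ‖φ n‖ ≤ c n * ‖φ (n+1)‖ + c (n-1) * ‖φ (n-1)‖ := by
      have := norm_add_le ((c n : ℂ) * φ (n+1)) ((c (n-1) : ℂ) * φ (n-1))
      rw [← e] at this
      simpa [norm_mul, Complex.norm_real, abs_of_pos hc, abs_of_pos hc']
        using this
    have h4 : d n * ‖φ n‖ ≤ c n * ‖φ (n+1)‖ + c (n-1) * ‖φ (n-1)‖ :=
      le_trans (mul_le_mul_of_nonneg_right (habs n) (norm_nonneg _)) h2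
    have hm1 : ‖φ (n+1)‖ ≤ ‖φ n‖ := hmono n (by omega)
    have hm2 : ‖φ n‖ ≤ ‖φ (n-1)‖ := by
      have := hmono (n-1) (by omega); simpa using this
    have h5 : d n * ‖φ n‖ ≤ (c n + c (n-1)) * ‖φ (n-1)‖ := by nlinarith
    have h6 : (c n + c (n-1)) * ((1+δ) * ‖φ n‖) ≤ (c n + c (n-1)) * ‖φ (n-1)‖ := by
      nlinarith [mul_le_mul_of_nonneg_right hdom (norm_nonneg (φ n))]
    exact le_of_mul_le_mul_left h6 (by linarith)
  intro k
  induction k with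
  | zero => simp
  | succ k ih =>
    have h13 : N + 1 ≤ N + (k+1 : ℕ) := by omega
    have hthis := hdec (N + (k+1:ℕ)) h13
    have h14 : (N : ℤ) + (k+1:ℕ) - 1 = N + k := by push_cast; ring
    rw [h14] at hthis
    have h15 : ‖φ (N + (k+1:ℕ))‖ ≤ ‖φ (N+k)‖ / (1+δ) := by
      rw [le_div_iff₀ h1δ]; linarith
    calc ‖φ (N + (k+1:ℕ))‖ ≤ ‖φ (N+k)‖ / (1+δ) := h15
      _ ≤ (‖φ N‖ * (1/(1+δ))^k) / (1+δ) :=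
          div_le_div_of_nonneg_right ih h1δ.le
      _ = ‖φ N‖ * (1/(1+δ))^(k+1) := by rw [pow_succ]; ring

lemma aps_no_eigen (c d : ℤ → ℝ) (z : ℂ) (hz : z.re = 0) (hzim : z.im ≠ 0)
    (φ : ℤ → ℂ) (δ C₁ : ℝ) (hδ : 0 < δ) (hC₁ : 0 < C₁) (N : ℕ)
    (hpos : ∀ n : ℤ, (N:ℤ) ≤ |n| → 0 < c n ∧ c n ≤ C₁*((n:ℝ)^2+1))
    (hdom : ∀ n : ℤ, (N:ℤ)+1 ≤ |n| → 0 < d n ∧ (1+δ)*(c n + c (n-1)) ≤ d n)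
    (heq : ∀ n : ℤ, ((d n : ℂ) - z) * φ n = (c n : ℂ) * φ (n+1) + (c (n-1) : ℂ) * φ (n-1))
    (htop : Tendsto (fun n : ℤ => ‖φ n‖) atTop (nhds 0))
    (hbot : Tendsto (fun n : ℤ => ‖φ n‖) atBot (nhds 0)) :
    ∀ n : ℤ, φ n = 0 := by
  have h1δ : (0:ℝ) < 1 + δ := by linarith
  set r : ℝ := 1/(1+δ) with hr
  have hr0 : 0 < r := by positivity
  have hr1 : r < 1 := by rw [hr, div_lt_one h1δ]; linarith
  -- right decay
  have hR : ∀ k : ℕ, ‖φ ((N:ℤ) + 1 + k)‖ ≤ ‖φ ((N:ℤ)+1)‖ * r^k := by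
    have := aps_decay c d z hz φ δ hδ ((N:ℤ)+1)
      (by
        intro n hn
        have h1 : (N:ℤ) ≤ |n| := by rw [abs_of_nonneg (by omega : (0:ℤ) ≤ n)]; omega
        have h2 : (N:ℤ) ≤ |n-1| := by rw [abs_of_nonneg (by omega : (0:ℤ) ≤ n-1)]; omega
        have h3 : (N:ℤ)+1 ≤ |n| := by rw [abs_of_nonneg (by omega : (0:ℤ) ≤ n)]; omega
        exact ⟨(hpos n h1).1, (hpos (n-1) h2).1, (hdom n h3).1, (hdom n h3).2⟩)
      heq htop
    intro k
    have h4 := this k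
    rw [hr]
    simpa [one_div, inv_pow] using h4
  -- left decay via reflection
  have hL : ∀ k : ℕ, ‖φ (-((N:ℤ) + 1 + k))‖ ≤ ‖φ (-((N:ℤ)+1))‖ * r^k := by
    have := aps_decay (fun n => c (-n-1)) (fun n => d (-n)) z hz (fun n => φ (-n)) δ hδ ((N:ℤ)+1)
      (by
        intro n hn
        have h1 : (N:ℤ) ≤ |-n-1| := by rw [abs_of_nonpos (by omega : -n-1 ≤ (0:ℤ))]; omega
        have h2 : (N:ℤ) ≤ |-n| := by rw [abs_of_nonpos (by omega : -n ≤ (0:ℤ))]; omega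
        have h3 : (N:ℤ)+1 ≤ |-n| := by rw [abs_of_nonpos (by omega : -n ≤ (0:ℤ))]; omega
        refine ⟨(hpos _ h1).1, ?_, (hdom _ h3).1, ?_⟩
        · show 0 < c (-(n-1)-1)
          rw [show -(n-1)-1 = -n from by ring]
          exact (hpos (-n) h2).1
        · show (1+δ) * (c (-n-1) + c (-(n-1)-1)) ≤ d (-n)
          rw [show -(n-1)-1 = -n from by ring]
          have h5 := (hdom (-n) h3).2
          have h6 : (-n : ℤ) - 1 = -n-1 := rfl
          rw [h6] at h5
          linarith)
      (by
        intro n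
        show ((d (-n):ℂ) - z) * φ (-n) = (c (-n-1):ℂ) * φ (-(n+1)) + (c (-(n-1)-1):ℂ) * φ (-(n-1))
        rw [show -(n-1)-1 = -n from by ring, show -(n+1) = -n-1 from by ring,
          show -(n-1) = -n+1 from by ring]
        have e := heq (-n)
        rw [show (-n : ℤ) - 1 = -n-1 from rfl] at e
        linear_combination e)
      (by
        have : Tendsto (fun n : ℤ => -n) atTop atBot := tendsto_neg_atTop_atBot
        exact hbot.comp this)
    intro k
    have h4 := this k
    rw [hr]
    have h7 : -((N:ℤ)+1+k) = -(k:ℤ) + (-1 + -(N:ℤ)) := by ring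
    have h8 : -((N:ℤ)+1) = (-1 + -(N:ℤ)) := by ring
    rw [h7, h8]
    simpa [one_div, inv_pow] using h4
  -- Wronskian
  set u : ℤ → ℂ := fun n => (c n : ℂ) *
    ((starRingEnd ℂ) (φ n) * φ (n+1) - φ n * (starRingEnd ℂ) (φ (n+1))) with hu
  have key : ∀ n : ℤ, ((starRingEnd ℂ) z - z) * (φ n * (starRingEnd ℂ) (φ n))
      = u n - u (n-1) := by
    intro n
    have e := heq n
    have econj := congrArg (starRingEnd ℂ) e
    simp only [map_add, map_mul, map_sub, Complex.conj_ofReal] at econj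
    simp only [hu]
    rw [show n-1+1 = n from by ring]
    linear_combination (starRingEnd ℂ) (φ n) * e - φ n * econj
  have habs2 : ‖(starRingEnd ℂ) z - z‖ = 2 * |z.im| := by
    have h9 : (starRingEnd ℂ) z - z = ((-2*z.im : ℝ) : ℂ) * Complex.I := by
      apply Complex.ext <;> simp <;> ring
    rw [h9, norm_mul]
    simp [Complex.norm_real, Complex.norm_I, abs_mul, abs_neg]
  have tele : ∀ M : ℕ, ((starRingEnd ℂ) z - z) *
      ((∑ n ∈ Finset.Icc (-(M:ℤ)) (M:ℤ), Complex.normSq (φ n) : ℝ) : ℂ)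
      = u (M:ℤ) - u (-(M:ℤ)-1) := by
    intro M
    induction M with
    | zero =>
      have h10 := key 0
      rw [Complex.mul_conj] at h10
      simpa using h10
    | succ M ih =>
      have hins : Finset.Icc (-(M+1:ℕ):ℤ) ((M+1:ℕ):ℤ)
          = insert (-(M:ℤ)-1) (insert ((M:ℤ)+1) (Finset.Icc (-(M:ℤ)) (M:ℤ))) := by
        ext x
        simp only [Finset.mem_Icc, Finset.mem_insert]
        push_cast
        omega
      have hm1 : (-(M:ℤ)-1) ∉ insert ((M:ℤ)+1) (Finset.Icc (-(M:ℤ)) (M:ℤ)) := by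
        simp only [Finset.mem_insert, Finset.mem_Icc]
        omega
      have hm2 : ((M:ℤ)+1) ∉ Finset.Icc (-(M:ℤ)) (M:ℤ) := by
        simp only [Finset.mem_Icc]; omega
      rw [hins, Finset.sum_insert hm1, Finset.sum_insert hm2]
      push_cast
      have k1 := key (-(M:ℤ)-1)
      have k2 := key ((M:ℤ)+1)
      rw [Complex.mul_conj] at k1 k2
      rw [show -(M:ℤ)-1-1 = -(M:ℤ)-2 from by ring] at k1
      rw [show (M:ℤ)+1-1 = (M:ℤ) from by ring] at k2
      have goal1 : ((starRingEnd ℂ) z - z) *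
          (((Complex.normSq (φ (-(M:ℤ)-1)) : ℝ) : ℂ) + ((Complex.normSq (φ ((M:ℤ)+1)) : ℝ) : ℂ)
            + ((∑ n ∈ Finset.Icc (-(M:ℤ)) (M:ℤ), Complex.normSq (φ n) : ℝ) : ℂ))
          = u ((M:ℤ)+1) - u (-(M:ℤ)-1-1) := by
        rw [mul_add, mul_add, ih, k1, k2]
        rw [show -(M:ℤ)-1-1 = -(M:ℤ)-2 from by ring]
        ring
      rw [show -(M:ℤ)-1-1 = -(M:ℤ)-2 from by ring] at goal1
      push_cast at goal1 ⊢
      rw [show -(M:ℤ)-2 = -((M:ℤ)+1)-1 from by ring] at goal1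
      linear_combination goal1
  -- bounds on u
  set Q : ℝ := ‖φ ((N:ℤ)+1)‖ with hQdef
  set Q' : ℝ := ‖φ (-((N:ℤ)+1))‖ with hQ'def
  set ρ : ℝ := r * r with hρdef
  have hρ0 : 0 ≤ ρ := by positivity
  have hρ1 : ρ < 1 := by
    calc ρ = r * r := rfl
      _ < 1 * 1 := by apply mul_lt_mul' hr1.le hr1 hr0.le; norm_num
      _ = 1 := by norm_num
  have hub : ∀ m : ℤ, (N:ℤ) ≤ |m| →
      ‖u m‖ ≤ 2 * (C₁*((m:ℝ)^2+1)) * (‖φ m‖ * ‖φ (m+1)‖) := by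
    intro m hm
    obtain ⟨hcm, hcb⟩ := hpos m hm
    have h1 : ‖u m‖ = ‖u m‖ := rfl
    have h2 : ‖u m‖ ≤ c m * (2 * (‖φ m‖ * ‖φ (m+1)‖)) := by
      simp only [hu]
      rw [norm_mul]
      have h3 : ‖((c m : ℝ) : ℂ)‖ = c m := by
        simp [Complex.norm_real, abs_of_pos hcm]
      rw [h3]
      apply mul_le_mul_of_nonneg_left _ hcm.le
      calc ‖(starRingEnd ℂ) (φ m) * φ (m+1) - φ m * (starRingEnd ℂ) (φ (m+1))‖
          ≤ ‖(starRingEnd ℂ) (φ m) * φ (m+1)‖ + ‖φ m * (starRingEnd ℂ) (φ (m+1))‖ :=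
            norm_sub_le _ _
        _ = 2 * (‖φ m‖ * ‖φ (m+1)‖) := by
            rw [norm_mul, norm_mul, RCLike.norm_conj, RCLike.norm_conj]; ring
    rw [h1]
    calc ‖u m‖ ≤ c m * (2 * (‖φ m‖ * ‖φ (m+1)‖)) := h2
      _ ≤ (C₁*((m:ℝ)^2+1)) * (2 * (‖φ m‖ * ‖φ (m+1)‖)) := by
          apply mul_le_mul_of_nonneg_right hcb (by positivity)
      _ = 2 * (C₁*((m:ℝ)^2+1)) * (‖φ m‖ * ‖φ (m+1)‖) := by ring
  have hgR : ∀ k : ℕ, ‖u ((N:ℤ)+1+k)‖ ≤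
      (4*C₁*((((N:ℝ)+1)^2+1)*(Q*Q))) * (((k:ℝ)^2+1) * ρ^k) := by
    intro k
    have hm : (N:ℤ) ≤ |(N:ℤ)+1+(k:ℤ)| := by
      rw [abs_of_nonneg (by omega : (0:ℤ) ≤ (N:ℤ)+1+(k:ℤ))]; omega
    have b1 := hub _ hm
    have b2 : ‖φ ((N:ℤ)+1+k)‖ ≤ Q * r^k := hR k
    have b3 : ‖φ ((N:ℤ)+1+(k:ℤ)+1)‖ ≤ Q * r^k := by
      have h4 := hR (k+1)
      have h5 : ((N:ℤ)+1+((k+1:ℕ):ℤ)) = (N:ℤ)+1+(k:ℤ)+1 := by push_cast; ring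
      rw [h5] at h4
      calc ‖φ ((N:ℤ)+1+(k:ℤ)+1)‖ ≤ Q * r^(k+1) := h4
        _ ≤ Q * r^k := by
            apply mul_le_mul_of_nonneg_left _ (norm_nonneg _)
            calc r^(k+1) = r^k * r := by ring
              _ ≤ r^k * 1 := by
                  apply mul_le_mul_of_nonneg_left hr1.le (by positivity)
              _ = r^k := by ring
    have b5 : ‖φ ((N:ℤ)+1+(k:ℤ))‖ * ‖φ ((N:ℤ)+1+(k:ℤ)+1)‖ ≤ (Q*Q) * ρ^k := by
      calc ‖φ ((N:ℤ)+1+(k:ℤ))‖ * ‖φ ((N:ℤ)+1+(k:ℤ)+1)‖ ≤ (Q*r^k) * (Q*r^k) :=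
          mul_le_mul b2 b3 (norm_nonneg _) (by positivity)
        _ = (Q*Q) * ρ^k := by rw [hρdef, mul_pow]; ring
    have b4 : (((N:ℤ)+1+(k:ℤ) : ℤ):ℝ)^2 + 1 ≤ 2*((((N:ℝ)+1)^2+1)*((k:ℝ)^2+1)) := by
      push_cast
      nlinarith [sq_nonneg ((N:ℝ)+1-(k:ℝ)), sq_nonneg (((N:ℝ)+1)*(k:ℝ))]
    calc ‖u ((N:ℤ)+1+k)‖ ≤ 2 * (C₁*((((N:ℤ)+1+(k:ℤ):ℤ):ℝ)^2+1)) * (‖φ ((N:ℤ)+1+(k:ℤ))‖ * ‖φ ((N:ℤ)+1+(k:ℤ)+1)‖) := b1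
      _ ≤ 2 * (C₁*(2*((((N:ℝ)+1)^2+1)*((k:ℝ)^2+1)))) * ((Q*Q) * ρ^k) := by
          apply mul_le_mul _ b5 (by positivity) (by positivity)
          apply mul_le_mul_of_nonneg_left _ (by norm_num : (0:ℝ) ≤ 2)
          exact mul_le_mul_of_nonneg_left b4 hC₁.le
      _ = (4*C₁*((((N:ℝ)+1)^2+1)*(Q*Q))) * (((k:ℝ)^2+1) * ρ^k) := by ring
  have hgL : ∀ k : ℕ, ‖u (-((N:ℤ)+1+k)-1)‖ ≤
      (4*C₁*((((N:ℝ)+2)^2+1)*(Q'*Q'))) * (((k:ℝ)^2+1) * ρ^k) := by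
    intro k
    have hm : (N:ℤ) ≤ |-((N:ℤ)+1+(k:ℤ))-1| := by
      rw [abs_of_nonpos (by omega : -((N:ℤ)+1+(k:ℤ))-1 ≤ 0)]; omega
    have b1 := hub _ hm
    have b2 : ‖φ (-((N:ℤ)+1+(k:ℤ))-1)‖ ≤ Q' * r^k := by
      have h4 := hL (k+1)
      have h5 : -((N:ℤ)+1+((k+1:ℕ):ℤ)) = -((N:ℤ)+1+(k:ℤ))-1 := by push_cast; ring
      rw [h5] at h4
      calc ‖φ (-((N:ℤ)+1+(k:ℤ))-1)‖ ≤ Q' * r^(k+1) := h4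
        _ ≤ Q' * r^k := by
            apply mul_le_mul_of_nonneg_left _ (norm_nonneg _)
            calc r^(k+1) = r^k * r := by ring
              _ ≤ r^k * 1 := by
                  apply mul_le_mul_of_nonneg_left hr1.le (by positivity)
              _ = r^k := by ring
    have b3 : ‖φ (-((N:ℤ)+1+(k:ℤ))-1+1)‖ ≤ Q' * r^k := by
      rw [show -((N:ℤ)+1+(k:ℤ))-1+1 = -((N:ℤ)+1+(k:ℤ)) from by ring]
      exact hL k
    have b5 : ‖φ (-((N:ℤ)+1+(k:ℤ))-1)‖ * ‖φ (-((N:ℤ)+1+(k:ℤ))-1+1)‖ ≤ (Q'*Q') * ρ^k := by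
      calc ‖φ (-((N:ℤ)+1+(k:ℤ))-1)‖ * ‖φ (-((N:ℤ)+1+(k:ℤ))-1+1)‖ ≤ (Q'*r^k) * (Q'*r^k) :=
          mul_le_mul b2 b3 (norm_nonneg _) (by positivity)
        _ = (Q'*Q') * ρ^k := by rw [hρdef, mul_pow]; ring
    have b4 : ((-((N:ℤ)+1+(k:ℤ))-1 : ℤ):ℝ)^2 + 1 ≤ 2*((((N:ℝ)+2)^2+1)*((k:ℝ)^2+1)) := by
      push_cast
      nlinarith [sq_nonneg ((N:ℝ)+2-(k:ℝ)), sq_nonneg (((N:ℝ)+2)*(k:ℝ))]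
    calc ‖u (-((N:ℤ)+1+k)-1)‖ ≤ 2 * (C₁*(((-((N:ℤ)+1+(k:ℤ))-1:ℤ):ℝ)^2+1)) * (‖φ (-((N:ℤ)+1+(k:ℤ))-1)‖ * ‖φ (-((N:ℤ)+1+(k:ℤ))-1+1)‖) := b1
      _ ≤ 2 * (C₁*(2*((((N:ℝ)+2)^2+1)*((k:ℝ)^2+1)))) * ((Q'*Q') * ρ^k) := by
          apply mul_le_mul _ b5 (by positivity) (by positivity)
          apply mul_le_mul_of_nonneg_left _ (by norm_num : (0:ℝ) ≤ 2)
          exact mul_le_mul_of_nonneg_left b4 hC₁.le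
      _ = (4*C₁*((((N:ℝ)+2)^2+1)*(Q'*Q'))) * (((k:ℝ)^2+1) * ρ^k) := by ring
  set D : ℝ := 4*C₁*((((N:ℝ)+1)^2+1)*(Q*Q)) + 4*C₁*((((N:ℝ)+2)^2+1)*(Q'*Q')) with hD
  have htend0 : Tendsto (fun k : ℕ => D * (((k:ℝ)^2+1) * ρ^k)) atTop (nhds 0) := by
    have hρn : ‖ρ‖ < 1 := by rw [Real.norm_eq_abs, abs_of_nonneg hρ0]; exact hρ1
    have t1 : Tendsto (fun k : ℕ => ((k:ℝ)^2) * ρ^k) atTop (nhds 0) := by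
      have := (summable_pow_mul_geometric_of_norm_lt_one 2 hρn).tendsto_atTop_zero
      simpa using this
    have t2 : Tendsto (fun k : ℕ => ρ^k) atTop (nhds 0) :=
      tendsto_pow_atTop_nhds_zero_of_lt_one hρ0 hρ1
    have t3 : Tendsto (fun k : ℕ => ((k:ℝ)^2+1) * ρ^k) atTop (nhds 0) := by
      have := t1.add t2
      simp only [add_zero] at this
      convert this using 2 with k
      ring
    have := t3.const_mul D
    simpa using this
  -- conclusion
  intro j
  have hzim' : 0 < |z.im| := abs_pos.mpr hzim
  have hfinal : 2*|z.im| * Complex.normSq (φ j) ≤ 0 := by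
    apply ge_of_tendsto htend0
    rw [eventually_atTop]
    refine ⟨j.natAbs, fun k hk => ?_⟩
    set M : ℕ := N + 1 + k with hM
    have hMc : ((M:ℕ):ℤ) = (N:ℤ)+1+(k:ℤ) := by rw [hM]; push_cast; ring
    have hmem : j ∈ Finset.Icc (-(M:ℤ)) (M:ℤ) := by
      rw [Finset.mem_Icc]
      omega
    have hsingle : Complex.normSq (φ j) ≤ ∑ n ∈ Finset.Icc (-(M:ℤ)) (M:ℤ), Complex.normSq (φ n) :=
      Finset.single_le_sum (fun i _ => Complex.normSq_nonneg _) hmem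
    have hT0 : (0:ℝ) ≤ ∑ n ∈ Finset.Icc (-(M:ℤ)) (M:ℤ), Complex.normSq (φ n) :=
      Finset.sum_nonneg (fun i _ => Complex.normSq_nonneg _)
    have htel := tele M
    have habsT := congrArg (‖·‖) htel
    rw [norm_mul, habs2] at habsT
    rw [Complex.norm_real, Real.norm_of_nonneg hT0] at habsT
    have hfin : 2*|z.im| * (∑ n ∈ Finset.Icc (-(M:ℤ)) (M:ℤ), Complex.normSq (φ n))
        ≤ ‖u (M:ℤ)‖ + ‖u (-(M:ℤ)-1)‖ := by
      rw [habsT]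
      exact norm_sub_le (u (M:ℤ)) (u (-(M:ℤ)-1))
    have hend : ‖u (M:ℤ)‖ + ‖u (-(M:ℤ)-1)‖ ≤ D * (((k:ℝ)^2+1) * ρ^k) := by
      rw [hD]
      have g1 := hgR k
      have g2 := hgL k
      rw [← hMc] at g1 g2
      calc ‖u (M:ℤ)‖ + ‖u (-(M:ℤ)-1)‖
          ≤ (4*C₁*((((N:ℝ)+1)^2+1)*(Q*Q))) * (((k:ℝ)^2+1) * ρ^k)
            + (4*C₁*((((N:ℝ)+2)^2+1)*(Q'*Q'))) * (((k:ℝ)^2+1) * ρ^k) := by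
            exact add_le_add g1 g2
        _ = (4*C₁*((((N:ℝ)+1)^2+1)*(Q*Q)) + 4*C₁*((((N:ℝ)+2)^2+1)*(Q'*Q'))) * (((k:ℝ)^2+1) * ρ^k) := by ring
    calc 2*|z.im| * Complex.normSq (φ j)
        ≤ 2*|z.im| * (∑ n ∈ Finset.Icc (-(M:ℤ)) (M:ℤ), Complex.normSq (φ n)) := by
          apply mul_le_mul_of_nonneg_left hsingle (by positivity)
      _ ≤ ‖u (M:ℤ)‖ + ‖u (-(M:ℤ)-1)‖ := hfin
      _ ≤ D * (((k:ℝ)^2+1) * ρ^k) := hend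
  have h0 : Complex.normSq (φ j) ≤ 0 := by nlinarith
  have := le_antisymm h0 (Complex.normSq_nonneg _)
  exact Complex.normSq_eq_zero.mp this


lemma aps_mini0 (θ w : ℝ) (hθ0 : 0 < θ) (hθ1 : θ < 1/10) (hw : 8 ≤ w) (hθw : 160 ≤ θ*w) :
    (1+θ)^2*((1-10*θ)*((w+6)*(w+8))) ≤ (1-θ)*((w-2+20*θ)*w) := by
  nlinarith [mul_nonneg (sub_nonneg.mpr hθw) (by linarith : (0:ℝ) ≤ w),
    sq_nonneg θ, mul_nonneg (mul_nonneg hθ0.le hθ0.le) (by linarith : (0:ℝ) ≤ w),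
    mul_nonneg (mul_nonneg hθ0.le hθ0.le) (by nlinarith : (0:ℝ) ≤ w*(w-2)),
    mul_nonneg (mul_nonneg (mul_nonneg hθ0.le hθ0.le) hθ0.le)
      (by nlinarith : (0:ℝ) ≤ (w+6)*(w+8)),
    mul_nonneg (sub_nonneg.mpr hθw) (mul_nonneg hθ0.le (by linarith : (0:ℝ) ≤ w))]

lemma aps_Bbound (α C₀ M₀ θ : ℝ) (hC₀ : 0 < C₀) (hθ0 : 0 < θ) (B : ℝ → ℝ)
    (hBval : ∀ v : ℝ, M₀ ≤ |v| → |(|v| * B v - 1 - α / v ^ 2)| ≤ C₀ / v ^ 4)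
    (v : ℝ) (hv : max M₀ (max 1 (Real.sqrt ((|α|+C₀+1)/θ))) ≤ |v|) :
    (1-θ)/|v| ≤ B v ∧ B v ≤ (1+θ)/|v| := by
  obtain ⟨hvM, hv2'⟩ := max_le_iff.mp hv
  obtain ⟨hv1, hvs⟩ := max_le_iff.mp hv2'
  set P := |α|+C₀+1 with hP
  have hP0 : 0 < P := by positivity
  have hv0 : 0 < |v| := by linarith
  have hs : P/θ ≤ v^2 := by
    have h1 : Real.sqrt (P/θ)^2 ≤ |v|^2 := by
      apply pow_le_pow_left₀ (Real.sqrt_nonneg _) hvs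
    rwa [Real.sq_sqrt (by positivity), sq_abs] at h1
  have hs2 : P ≤ θ*v^2 := by rw [div_le_iff₀ hθ0] at hs; linarith
  have hone : 1 ≤ v^2 := by
    nlinarith [mul_le_mul hv1 hv1 (by norm_num) (abs_nonneg v), sq_abs v]
  have hv2 : (0:ℝ) < v^2 := by linarith
  have hv4 : (0:ℝ) < v^4 := by nlinarith
  have habs := hBval v hvM
  rw [abs_le] at habs
  have key : |α| * v ^ 2 + C₀ ≤ θ*v^4 := by
    nlinarith [mul_le_mul_of_nonneg_right hs2 hv2.le, abs_nonneg α]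
  have hαle : α ≤ |α| := le_abs_self α
  have hαge : -|α| ≤ α := neg_abs_le α
  constructor
  · rw [div_le_iff₀ hv0]
    have e1 : α/v^2 - C₀/v^4 = (α * v ^ 2 - C₀)/v^4 := by field_simp
    have e2 : -θ ≤ (α * v ^ 2 - C₀)/v^4 := by
      rw [le_div_iff₀ hv4]
      nlinarith [mul_le_mul_of_nonneg_right hαge hv2.le]
    have h3 : 1 + (α / v ^ 2 - C₀ / v ^ 4) ≤ |v| * B v := by linarith [habs.1]
    rw [e1] at h3
    have h4 : B v * |v| = |v| * B v := mul_comm _ _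
    linarith
  · rw [le_div_iff₀ hv0]
    have e1 : α/v^2 + C₀/v^4 = (α * v ^ 2 + C₀)/v^4 := by field_simp
    have e2 : (α * v ^ 2 + C₀)/v^4 ≤ θ := by
      rw [div_le_iff₀ hv4]
      nlinarith [mul_le_mul_of_nonneg_right hαle hv2.le]
    have h3 : |v| * B v ≤ 1 + (α / v ^ 2 + C₀ / v ^ 4) := by linarith [habs.2]
    rw [e1] at h3
    have h4 : B v * |v| = |v| * B v := mul_comm _ _
    linarith

set_option maxHeartbeats 1000000 in
lemma aps_asymptotics (G ε α Λ : ℝ) (hG : 0 < G) (hε : ε ∈ Set.Ioo (0 : ℝ) 4) (hΛ : 0 < Λ)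
    (A B : ℝ → ℝ)
    (hA : ∃ R > (0 : ℝ), ∀ v : ℝ, R ≤ |v| → A v = 3 * Real.pi * G / 4 * |v|)
    (hB : ∃ C₀ > (0 : ℝ), ∃ M₀ > (0 : ℝ), ∀ v : ℝ, M₀ ≤ |v| →
      abs (|v| * B v - 1 - α / v ^ 2) ≤ C₀ / v ^ 4)
    (hBpos : ∀ n : ℤ, 0 < B (4 * (n : ℝ) + ε))
    (c d : ℤ → ℝ)
    (hc : ∀ n : ℤ, c n = A (4 * (n : ℝ) + ε + 2) /
      Real.sqrt (B (4 * (n : ℝ) + ε) * B (4 * ((n : ℝ) + 1) + ε)))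
    (hd : ∀ n : ℤ, d n = (A (4 * (n : ℝ) + ε + 2) + A (4 * (n : ℝ) + ε - 2)
      + Λ * |4 * (n : ℝ) + ε|) / B (4 * (n : ℝ) + ε)) :
    ∃ δ : ℝ, 0 < δ ∧ ∃ C₁ : ℝ, 0 < C₁ ∧ ∃ N : ℕ,
      (∀ n : ℤ, (N:ℤ) ≤ |n| → 0 < c n ∧ c n ≤ C₁*((n:ℝ)^2+1)) ∧
      (∀ n : ℤ, (N:ℤ)+1 ≤ |n| → 0 < d n ∧ (1+δ)*(c n + c (n-1)) ≤ d n) := by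
  obtain ⟨R, hR0, hAval⟩ := hA
  obtain ⟨C₀, hC₀, M₀, hM₀, hBval⟩ := hB
  obtain ⟨hε0, hε4⟩ := hε
  obtain ⟨K, hKdef⟩ : ∃ K : ℝ, K = 3 * Real.pi * G / 4 := ⟨_, rfl⟩
  have hK0 : 0 < K := by
    have := Real.pi_pos
    rw [hKdef]; positivity
  obtain ⟨θ, hθdef⟩ : ∃ θ : ℝ, θ = Λ/(20*K+10*Λ) := ⟨_, rfl⟩
  have hθ0 : 0 < θ := by rw [hθdef]; positivity
  have hθ10 : θ < 1/10 := by
    rw [hθdef, div_lt_iff₀ (by positivity)]; linarith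
  have h1mθ : 0 < 1 - θ := by linarith
  have h1pθ : 0 < 1 + θ := by linarith
  have hrel : Λ = 10*θ*(2*K+Λ) := by
    rw [hθdef]; field_simp; ring
  obtain ⟨M₁, hM₁def⟩ : ∃ M₁ : ℝ, M₁ = max M₀ (max 1 (Real.sqrt ((|α|+C₀+1)/θ))) := ⟨_, rfl⟩
  obtain ⟨W, hWdef⟩ : ∃ W : ℝ, W = max (R+2) (max (M₁+4) (max (160/θ + 8) 8)) := ⟨_, rfl⟩
  have hW8 : 8 ≤ W := by
    rw [hWdef]
    exact le_trans (le_max_right _ _) (le_trans (le_max_right _ _) (le_max_right _ _))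
  have hWR : R + 2 ≤ W := by rw [hWdef]; exact le_max_left _ _
  have hWM : M₁ + 4 ≤ W := by
    rw [hWdef]; exact le_trans (le_max_left _ _) (le_max_right _ _)
  have hWθ : 160/θ + 8 ≤ W := by
    rw [hWdef]
    exact le_trans (le_max_left _ _) (le_trans (le_max_right _ _) (le_max_right _ _))
  obtain ⟨N, hNdef⟩ : ∃ N : ℕ, N = ⌈(W+4)/4⌉₊ := ⟨_, rfl⟩
  -- basic w-facts for |m| ≥ N
  have hwfact : ∀ m : ℤ, (N:ℤ) ≤ |m| →
      W ≤ |4*(m:ℝ)+ε| ∧ |4*(m:ℝ)+ε| ≤ 4*|(m:ℝ)|+4 := by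
    intro m hm
    have h1 : ((N:ℕ):ℝ) ≤ |(m:ℝ)| := by exact_mod_cast hm
    have h2 : (W+4)/4 ≤ (N:ℝ) := by rw [hNdef]; exact Nat.le_ceil _
    have h3 : |4*(m:ℝ)| ≤ |4*(m:ℝ)+ε| + |ε| := by
      calc |4*(m:ℝ)| = |(4*(m:ℝ)+ε) + (-ε)| := by ring_nf
        _ ≤ |4*(m:ℝ)+ε| + |(-ε)| := abs_add_le _ _
        _ = |4*(m:ℝ)+ε| + |ε| := by rw [abs_neg]
    have h4 : |4*(m:ℝ)| = 4*|(m:ℝ)| := by rw [abs_mul]; norm_num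
    have h5 : |ε| = ε := abs_of_pos hε0
    constructor
    · nlinarith [h3, h4 ▸ h3]
    · calc |4*(m:ℝ)+ε| ≤ |4*(m:ℝ)| + |ε| := abs_add_le _ _
        _ = 4*|(m:ℝ)| + ε := by rw [h4, h5]
        _ ≤ 4*|(m:ℝ)| + 4 := by linarith
  -- bound for c
  have hcb : ∀ m : ℤ, (N:ℤ) ≤ |m| → 0 < c m ∧
      c m ≤ K*((|4*(m:ℝ)+ε|+2)*(|4*(m:ℝ)+ε|+4))/(1-θ) := by
    intro m hm
    obtain ⟨hw, hwu⟩ := hwfact m hm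
    have hcm := hc m
    rw [show 4*((m:ℝ)+1)+ε = 4*(m:ℝ)+ε+4 from by ring] at hcm
    set v := 4*(m:ℝ)+ε with hvdef
    set w := |v| with hwv
    have hw0 : 0 < w := by linarith
    -- abs comparisons
    have ha2 : |v+2| ≤ w+2 := by
      calc |v+2| ≤ |v| + |(2:ℝ)| := abs_add_le _ _
        _ = w+2 := by rw [hwv]; norm_num
    have ha2' : w-2 ≤ |v+2| := by
      have : |v| ≤ |v+2| + 2 := by
        calc |v| = |(v+2)+(-2)| := by ring_nf
          _ ≤ |v+2| + |(-2:ℝ)| := abs_add_le _ _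
          _ = |v+2| + 2 := by norm_num
      linarith
    have ha4 : |v+4| ≤ w+4 := by
      calc |v+4| ≤ |v| + |(4:ℝ)| := abs_add_le _ _
        _ = w+4 := by rw [hwv]; norm_num
    have ha4' : w-4 ≤ |v+4| := by
      have : |v| ≤ |v+4| + 4 := by
        calc |v| = |(v+4)+(-4)| := by ring_nf
          _ ≤ |v+4| + |(-4:ℝ)| := abs_add_le _ _
          _ = |v+4| + 4 := by norm_num
      linarith
    -- A value
    have hA2 : A (v+2) = K * |v+2| := by
      rw [hAval (v+2) (by linarith), ← hKdef]
    -- B bounds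
    have hBv := aps_Bbound α C₀ M₀ θ hC₀ hθ0 B hBval v (by rw [← hM₁def]; linarith)
    have hBv4 := aps_Bbound α C₀ M₀ θ hC₀ hθ0 B hBval (v+4) (by rw [← hM₁def]; linarith)
    have hv2pos : (0:ℝ) < |v+2| := by linarith
    have hBvpos : 0 < B v := hBpos m
    have hBv4pos : 0 < B (v+4) := by
      have := hBpos (m+1)
      rwa [show 4*(((m+1:ℤ)):ℝ)+ε = v+4 from by push_cast; rw [hvdef]; ring] at this
    -- sqrt lower bound
    set L := (1-θ)/(w+4) with hLdef
    have hL0 : 0 < L := by positivity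
    have hl1 : L ≤ B v := by
      refine le_trans ?_ hBv.1
      rw [hLdef]
      exact div_le_div_of_nonneg_left h1mθ.le hw0 (by linarith)
    have hl2 : L ≤ B (v+4) := by
      refine le_trans ?_ hBv4.1
      rw [hLdef]
      have hv40 : 0 < |v+4| := by linarith
      exact div_le_div_of_nonneg_left h1mθ.le hv40 ha4
    have hsqrt : L ≤ Real.sqrt (B v * B (v+4)) := by
      rw [show L = Real.sqrt (L^2) from (Real.sqrt_sq hL0.le).symm]
      apply Real.sqrt_le_sqrt
      calc L^2 = L*L := sq L
        _ ≤ B v * B (v+4) := mul_le_mul hl1 hl2 hL0.le hBvpos.le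
    have hsqrtpos : 0 < Real.sqrt (B v * B (v+4)) := lt_of_lt_of_le hL0 hsqrt
    constructor
    · rw [hcm, hA2]
      exact div_pos (mul_pos hK0 hv2pos) hsqrtpos
    · rw [hcm, hA2]
      calc K * |v+2| / Real.sqrt (B v * B (v+4)) ≤ (K*(w+2)) / L := by
            apply div_le_div₀ (mul_nonneg hK0.le (by linarith : (0:ℝ) ≤ w+2)) _ hL0 hsqrt
            exact mul_le_mul_of_nonneg_left ha2 hK0.le
        _ = K*((w+2)*(w+4))/(1-θ) := by
            rw [hLdef]
            field_simp
  -- bound for c (m-1)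
  have hcb' : ∀ m : ℤ, (N:ℤ)+1 ≤ |m| → 0 < c (m-1) ∧
      c (m-1) ≤ K*((|4*(m:ℝ)+ε|+6)*(|4*(m:ℝ)+ε|+8))/(1-θ) := by
    intro m hm
    have habs1 : |m| - |(1:ℤ)| ≤ |m-1| := abs_sub_abs_le_abs_sub m 1
    have hm' : (N:ℤ) ≤ |m-1| := by
      have : |(1:ℤ)| = 1 := by norm_num
      omega
    obtain ⟨hpos1, hub1⟩ := hcb (m-1) hm'
    refine ⟨hpos1, ?_⟩
    have e1 : (((m-1:ℤ)):ℝ) = (m:ℝ)-1 := by push_cast; ring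
    rw [e1] at hub1
    have h2 : |4*((m:ℝ)-1)+ε| ≤ |4*(m:ℝ)+ε| + 4 := by
      calc |4*((m:ℝ)-1)+ε| = |(4*(m:ℝ)+ε) + (-4)| := by ring_nf
        _ ≤ |4*(m:ℝ)+ε| + |(-4:ℝ)| := abs_add_le _ _
        _ = |4*(m:ℝ)+ε| + 4 := by norm_num
    refine le_trans hub1 ?_
    have hw' : (0:ℝ) ≤ |4*((m:ℝ)-1)+ε| := abs_nonneg _
    have hw'' : (0:ℝ) ≤ |4*(m:ℝ)+ε| := abs_nonneg _
    apply div_le_div_of_nonneg_right _ h1mθ.le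
    apply mul_le_mul_of_nonneg_left _ hK0.le
    exact mul_le_mul (by linarith) (by linarith) (by linarith) (by linarith)
  -- bound for d
  have hdb : ∀ m : ℤ, (N:ℤ) ≤ |m| →
      (2*K*(|4*(m:ℝ)+ε|-2) + Λ*|4*(m:ℝ)+ε|) * (|4*(m:ℝ)+ε|/(1+θ)) ≤ d m ∧ 0 < d m := by
    intro m hm
    obtain ⟨hw, hwu⟩ := hwfact m hm
    have hdm := hd m
    obtain ⟨v, hvdef⟩ : ∃ v : ℝ, v = 4*(m:ℝ)+ε := ⟨_, rfl⟩
    rw [← hvdef] at hdm hw hwu ⊢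
    have hBvpos : 0 < B v := by rw [hvdef]; exact hBpos m
    obtain ⟨w, hwv⟩ : ∃ w : ℝ, w = |v| := ⟨_, rfl⟩
    rw [← hwv] at hdm hw hwu ⊢
    have hw0 : 0 < w := by linarith
    have ha2' : w-2 ≤ |v+2| := by
      have : |v| ≤ |v+2| + 2 := by
        calc |v| = |(v+2)+(-2)| := by ring_nf
          _ ≤ |v+2| + |(-2:ℝ)| := abs_add_le _ _
          _ = |v+2| + 2 := by norm_num
      linarith
    have ha2'' : w-2 ≤ |v-2| := by
      have : |v| ≤ |v-2| + 2 := by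
        calc |v| = |(v-2)+2| := by ring_nf
          _ ≤ |v-2| + |(2:ℝ)| := abs_add_le _ _
          _ = |v-2| + 2 := by norm_num
      linarith
    have hA2 : A (v+2) = K * |v+2| := by
      rw [hAval (v+2) (by linarith), ← hKdef]
    have hA2' : A (v-2) = K * |v-2| := by
      rw [hAval (v-2) (by linarith), ← hKdef]
    have hBv := aps_Bbound α C₀ M₀ θ hC₀ hθ0 B hBval v (by rw [← hM₁def, ← hwv]; linarith)
    have hnum_lb : 2*K*(w-2) + Λ*w ≤ A (v+2) + A (v-2) + Λ*w := by
      rw [hA2, hA2']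
      have g1 : K*(w-2) ≤ K*|v+2| := mul_le_mul_of_nonneg_left ha2' hK0.le
      have g2 : K*(w-2) ≤ K*|v-2| := mul_le_mul_of_nonneg_left ha2'' hK0.le
      linarith
    have hw8' : (8:ℝ) ≤ w := le_trans hW8 hw
    have hnum_pos : 0 < A (v+2) + A (v-2) + Λ*w := by
      have g3 : (0:ℝ) < Λ*w := mul_pos hΛ (by linarith)
      have g4 : (0:ℝ) < K*(w-2) := mul_pos hK0 (by linarith)
      linarith
    constructor
    · rw [hdm]
      have step1 : (A (v+2) + A (v-2) + Λ*w)/((1+θ)/w) ≤ (A (v+2) + A (v-2) + Λ*w)/(B v) :=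
        div_le_div_of_nonneg_left hnum_pos.le hBvpos (hwv ▸ hBv.2)
      have e5 : (A (v+2) + A (v-2) + Λ*w)/((1+θ)/w) = (A (v+2) + A (v-2) + Λ*w)*(w/(1+θ)) := by
        field_simp
      have step2 : (2*K*(w-2) + Λ*w) * (w/(1+θ)) ≤ (A (v+2) + A (v-2) + Λ*w)*(w/(1+θ)) :=
        mul_le_mul_of_nonneg_right hnum_lb (by positivity)
      calc (2*K*(w-2) + Λ*w) * (w/(1+θ)) ≤ (A (v+2) + A (v-2) + Λ*w)*(w/(1+θ)) := step2
        _ = (A (v+2) + A (v-2) + Λ*w)/((1+θ)/w) := e5.symm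
        _ ≤ (A (v+2) + A (v-2) + Λ*w)/(B v) := step1
    · rw [hdm]
      exact div_pos hnum_pos hBvpos
  -- assemble
  refine ⟨θ, hθ0, 304*K, by positivity, N, ?_, ?_⟩
  · intro n hn
    obtain ⟨hpos1, hub1⟩ := hcb n hn
    obtain ⟨hw, hwu⟩ := hwfact n hn
    refine ⟨hpos1, ?_⟩
    obtain ⟨w, hwdef⟩ : ∃ w : ℝ, w = |4*(n:ℝ)+ε| := ⟨_, rfl⟩
    rw [← hwdef] at hub1 hw hwu
    have hw0 : (0:ℝ) ≤ w := hwdef ▸ abs_nonneg _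
    obtain ⟨a, hadef⟩ : ∃ a : ℝ, a = |(n:ℝ)| := ⟨_, rfl⟩
    rw [← hadef] at hwu
    have ha0 : (0:ℝ) ≤ a := hadef ▸ abs_nonneg _
    have hsq : a^2 = (n:ℝ)^2 := by rw [hadef]; exact sq_abs _
    have step1 : K*((w+2)*(w+4))/(1-θ) ≤ 2*(K*((w+2)*(w+4))) := by
      rw [div_le_iff₀ h1mθ]
      have hnn : (0:ℝ) ≤ K*((w+2)*(w+4)) := by positivity
      nlinarith
    have step2 : (w+2)*(w+4) ≤ 152*(a^2+1) := by nlinarith [sq_nonneg (a-1), sq_nonneg a]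
    have step3 : 2*(K*((w+2)*(w+4))) ≤ 304*K*((n:ℝ)^2+1) := by
      rw [← hsq]
      nlinarith [hK0.le, mul_le_mul_of_nonneg_left step2 hK0.le]
    linarith
  · intro n hn
    have hn' : (N:ℤ) ≤ |n| := by linarith
    obtain ⟨hcpos, hcub⟩ := hcb n hn'
    obtain ⟨hcpos', hcub'⟩ := hcb' n hn
    obtain ⟨hdlb, hdpos⟩ := hdb n hn'
    obtain ⟨hw, hwu⟩ := hwfact n hn'
    refine ⟨hdpos, ?_⟩
    obtain ⟨w, hwdef⟩ : ∃ w : ℝ, w = |4*(n:ℝ)+ε| := ⟨_, rfl⟩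
    rw [← hwdef] at hcub hcub' hdlb hw hwu
    have hw0 : (0:ℝ) ≤ w := hwdef ▸ abs_nonneg _
    have hw8 : 8 ≤ w := le_trans hW8 hw
    have hθw : 160 ≤ θ*w := by
      have h6 : 160/θ ≤ w := by linarith [le_trans hWθ hw]
      rw [div_le_iff₀ hθ0] at h6
      linarith [mul_comm w θ]
    have m0 := aps_mini0 θ w hθ0 hθ10 hw8 hθw
    have e3 : (1-10*θ)*((2*K*(w-2)+Λ*w)*w*(1-θ)) = (2*K)*((1-θ)*((w-2+20*θ)*w)) := by
      linear_combination (w^2*(1-θ)) * hrel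
    have e4 : (1-10*θ)*((1+θ)^2*(2*K*((w+6)*(w+8)))) =
        (2*K)*((1+θ)^2*((1-10*θ)*((w+6)*(w+8)))) := by ring
    have h110 : (0:ℝ) < 1-10*θ := by linarith
    have T' : (1-10*θ)*((1+θ)^2*(2*K*((w+6)*(w+8)))) ≤
        (1-10*θ)*((2*K*(w-2)+Λ*w)*w*(1-θ)) := by
      rw [e3, e4]
      exact mul_le_mul_of_nonneg_left m0 (by positivity)
    have T : (1+θ)^2*(2*K*((w+6)*(w+8))) ≤ (2*K*(w-2)+Λ*w)*w*(1-θ) :=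
      le_of_mul_le_mul_left T' h110
    have hmono : K*((w+2)*(w+4))/(1-θ) ≤ K*((w+6)*(w+8))/(1-θ) := by
      apply div_le_div_of_nonneg_right _ h1mθ.le
      apply mul_le_mul_of_nonneg_left _ hK0.le
      nlinarith
    have hsum : c n + c (n-1) ≤ 2*(K*((w+6)*(w+8))/(1-θ)) := by linarith
    have hX : (1+θ)*(c n + c (n-1)) ≤ (1+θ)*(2*(K*((w+6)*(w+8))/(1-θ))) :=
      mul_le_mul_of_nonneg_left hsum h1pθ.le
    have hXY : (1+θ)*(2*(K*((w+6)*(w+8))/(1-θ))) ≤ (2*K*(w-2)+Λ*w)*(w/(1+θ)) := by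
      rw [show (1+θ)*(2*(K*((w+6)*(w+8))/(1-θ))) = ((1+θ)*(2*K*((w+6)*(w+8))))/(1-θ) from by ring,
        show (2*K*(w-2)+Λ*w)*(w/(1+θ)) = ((2*K*(w-2)+Λ*w)*w)/(1+θ) from by ring,
        div_le_div_iff₀ h1mθ h1pθ]
      nlinarith [T]
    linarith

/-- If Λ̃ > 0, the APS operator H, defined on the finitely supported
sequences in ℓ²(ℤ, ℂ), is essentially self-adjoint, i.e. the ranges of H ± i·id on
finitely supported sequences are dense in ℓ²(ℤ, ℂ). -/
theorem aps_essentially_selfAdjoint_of_neg_cosmological_constant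
    (G ε α Λ : ℝ) (hG : 0 < G) (hε : ε ∈ Set.Ioo (0 : ℝ) 4) (hΛ : 0 < Λ)
    (A B : ℝ → ℝ)
    (hA : ∃ R > (0 : ℝ), ∀ v : ℝ, R ≤ |v| → A v = 3 * Real.pi * G / 4 * |v|)
    (hB : ∃ C₀ > (0 : ℝ), ∃ M₀ > (0 : ℝ), ∀ v : ℝ, M₀ ≤ |v| →
      abs (|v| * B v - 1 - α / v ^ 2) ≤ C₀ / v ^ 4)
    (hBpos : ∀ n : ℤ, 0 < B (4 * (n : ℝ) + ε))
    (c d : ℤ → ℝ)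
    (hc : ∀ n : ℤ, c n = A (4 * (n : ℝ) + ε + 2) /
      Real.sqrt (B (4 * (n : ℝ) + ε) * B (4 * ((n : ℝ) + 1) + ε)))
    (hd : ∀ n : ℤ, d n = (A (4 * (n : ℝ) + ε + 2) + A (4 * (n : ℝ) + ε - 2)
      + Λ * |4 * (n : ℝ) + ε|) / B (4 * (n : ℝ) + ε))
    (H : (ℤ → ℂ) → (ℤ → ℂ))
    (hH : ∀ (ψ : ℤ → ℂ) (n : ℤ),
      H ψ n = -(c (n - 1) : ℂ) * ψ (n - 1) - (c n : ℂ) * ψ (n + 1) + (d n : ℂ) * ψ n) :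
    Dense {f : lp (fun _ : ℤ => ℂ) 2 |
      ∃ ψ : ℤ → ℂ, (Function.support ψ).Finite ∧
        ∀ n : ℤ, f n = H ψ n + Complex.I * ψ n} ∧
    Dense {f : lp (fun _ : ℤ => ℂ) 2 |
      ∃ ψ : ℤ → ℂ, (Function.support ψ).Finite ∧
        ∀ n : ℤ, f n = H ψ n - Complex.I * ψ n} := by
  obtain ⟨δ, hδ0, C₁, hC₁0, N, hpos, hdom⟩ :=
    aps_asymptotics G ε α Λ hG hε hΛ A B hA hB hBpos c d hc hd
  have main : ∀ z : ℂ, z.re = 0 → z.im ≠ 0 →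
      Dense {f : lp (fun _ : ℤ => ℂ) 2 | ∃ ψ : ℤ → ℂ, (Function.support ψ).Finite ∧
        ∀ n : ℤ, f n = H ψ n + z * ψ n} := by
    intro z hzre hzim
    set S : Submodule ℂ (lp (fun _ : ℤ => ℂ) 2) :=
      { carrier := {f | ∃ ψ : ℤ → ℂ, (Function.support ψ).Finite ∧
          ∀ n : ℤ, f n = H ψ n + z * ψ n}
        add_mem' := by
          rintro a b ⟨ψa, hfa, ha⟩ ⟨ψb, hfb, hb⟩
          refine ⟨ψa + ψb, (hfa.union hfb).subset (Function.support_add _ _), fun n => ?_⟩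
          have : (↑(a + b) : ℤ → ℂ) n = a n + b n := by
            rw [lp.coeFn_add]; rfl
          rw [this, ha n, hb n, hH, hH, hH]
          simp only [Pi.add_apply]
          ring
        zero_mem' := by
          refine ⟨0, by simp, fun n => ?_⟩
          have : (↑(0 : lp (fun _ : ℤ => ℂ) 2) : ℤ → ℂ) n = 0 := by
            rw [lp.coeFn_zero]; rfl
          rw [this, hH]
          simp
        smul_mem' := by
          rintro r a ⟨ψa, hfa, ha⟩
          refine ⟨r • ψa, hfa.subset (Function.support_smul_subset_right _ _), fun n => ?_⟩
          have : (↑(r • a) : ℤ → ℂ) n = r * a n := by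
            rw [lp.coeFn_smul]; rfl
          rw [this, ha n, hH, hH]
          simp only [Pi.smul_apply, smul_eq_mul]
          ring } with hSdef
    have horth : Sᗮ = ⊥ := by
      rw [Submodule.eq_bot_iff]
      intro φ hφmem
      rw [Submodule.mem_orthogonal] at hφmem
      -- eigen-equation
      have heq : ∀ m : ℤ, ((d m : ℂ) - z) * φ m = (c m : ℂ) * φ (m+1) + (c (m-1) : ℂ) * φ (m-1) := by
        intro m
        set ψ : ℤ → ℂ := Pi.single m 1 with hψdef
        set g : ℤ → ℂ := fun n => H ψ n + z * ψ n with hgdef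
        have hψ : ∀ n : ℤ, ψ n = if n = m then 1 else 0 := by
          intro n
          by_cases h : n = m
          · subst h; rw [if_pos rfl]; simp [hψdef]
          · rw [if_neg h]; exact Pi.single_eq_of_ne h 1
        have hgval : ∀ n : ℤ, g n = -(c (n-1) : ℂ) * (if n-1 = m then 1 else 0)
            - (c n : ℂ) * (if n+1 = m then 1 else 0)
            + ((d n : ℂ) + z) * (if n = m then 1 else 0) := by
          intro n
          rw [hgdef]
          simp only [hH ψ n, hψ]
          ring
        have hgsupp : ∀ n : ℤ, n ∉ ({m-1, m, m+1} : Finset ℤ) → g n = 0 := by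
          intro n hn
          simp only [Finset.mem_insert, Finset.mem_singleton] at hn
          push_neg at hn
          rw [hgval]
          rw [if_neg (by omega), if_neg (by omega), if_neg (by omega)]
          ring
        have hmem : Memℓp g 2 := by
          apply memℓp_gen
          apply summable_of_ne_finset_zero (s := ({m-1, m, m+1} : Finset ℤ))
          intro b hb
          rw [hgsupp b hb]
          simp [Real.zero_rpow]
        set F : lp (fun _ : ℤ => ℂ) 2 := ⟨g, hmem⟩ with hFdef
        have hFS : F ∈ S := ⟨ψ, (Set.finite_singleton m).subset (Function.support_subset_iff'.mpr
          (fun n hn => by rw [hψ n, if_neg (by simpa using hn)])), fun n => rfl⟩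
        have hinner := hφmem F hFS
        rw [lp.inner_eq_tsum] at hinner
        have hcoe : ∀ n : ℤ, F n = g n := fun n => rfl
        have htsum : ∑' n : ℤ, (inner ℂ (F n) (φ n) : ℂ) =
            ∑ n ∈ ({m-1, m, m+1} : Finset ℤ), (starRingEnd ℂ) (g n) * φ n := by
          rw [tsum_eq_sum (s := ({m-1, m, m+1} : Finset ℤ))]
          · apply Finset.sum_congr rfl
            intro n _
            rw [hcoe n, RCLike.inner_apply, mul_comm]
          · intro b hb
            rw [RCLike.inner_apply, hcoe b, hgsupp b hb]
            simp
        rw [htsum] at hinner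
        have hm1 : (m-1 : ℤ) ≠ m := by omega
        have hm2 : (m-1 : ℤ) ≠ m+1 := by omega
        have hm3 : (m : ℤ) ≠ m+1 := by omega
        rw [Finset.sum_insert (by simp [hm1, hm2]), Finset.sum_insert (by simp [hm3]),
          Finset.sum_singleton] at hinner
        have gv1 : g (m-1) = -(c (m-1) : ℂ) := by
          rw [hgval (m-1), if_neg (show ¬(m-1-1 = m) from by omega),
            if_pos (show m-1+1 = m from by omega), if_neg (show ¬(m-1 = m) from by omega)]
          ring
        have gv2 : g m = (d m : ℂ) + z := by
          rw [hgval m, if_neg (show ¬(m-1 = m) from by omega),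
            if_neg (show ¬(m+1 = m) from by omega), if_pos rfl]
          ring
        have gv3 : g (m+1) = -(c m : ℂ) := by
          rw [hgval (m+1), if_pos (show m+1-1 = m from by omega),
            if_neg (show ¬(m+1+1 = m) from by omega),
            if_neg (show ¬(m+1 = m) from by omega),
            show (m+1 : ℤ)-1 = m from by omega]
          ring
        rw [gv1, gv2, gv3] at hinner
        have hzconj : (starRingEnd ℂ) z = -z := by
          apply Complex.ext <;> simp [hzre]
        simp only [map_add, map_neg, Complex.conj_ofReal, hzconj] at hinner
        linear_combination hinner
      -- decay of φ at both infinities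
      have hsum2 : Summable (fun n : ℤ => ‖φ n‖ ^ (2:ENNReal).toReal) :=
        (lp.memℓp φ).summable (by norm_num)
      have htends : Tendsto (fun n : ℤ => ‖φ n‖ ^ (2:ENNReal).toReal) cofinite (nhds 0) :=
        hsum2.tendsto_cofinite_zero
      have htendn : Tendsto (fun n : ℤ => ‖φ n‖) cofinite (nhds 0) := by
        have hcont : Tendsto (fun x : ℝ => Real.sqrt x) (nhds 0) (nhds 0) := by
          have := Real.continuous_sqrt.tendsto 0
          simpa using this
        have := hcont.comp htends
        convert this using 2 with n
        rw [Function.comp_apply, show (2:ENNReal).toReal = (2:ℝ) from by norm_num,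
          show ‖φ n‖ ^ (2:ℝ) = ‖φ n‖^(2:ℕ) from by
            rw [← Real.rpow_natCast]; norm_num,
          Real.sqrt_sq (norm_nonneg _)]
      have hcof : (cofinite : Filter ℤ) = atBot ⊔ atTop := Int.cofinite_eq
      have htop : Tendsto (fun n : ℤ => ‖φ n‖) atTop (nhds 0) :=
        htendn.mono_left (hcof ▸ le_sup_right)
      have hbot : Tendsto (fun n : ℤ => ‖φ n‖) atBot (nhds 0) :=
        htendn.mono_left (hcof ▸ le_sup_left)
      have hzero := aps_no_eigen c d z hzre hzim (⇑φ) δ C₁ hδ0 hC₁0 N hpos hdom heq htop hbot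
      apply lp.ext
      funext n
      rw [hzero n, lp.coeFn_zero]
      rfl
    -- density
    have htopcl : S.topologicalClosure = ⊤ :=
      Submodule.topologicalClosure_eq_top_iff.mpr horth
    have : Dense (S : Set (lp (fun _ : ℤ => ℂ) 2)) := by
      rw [dense_iff_closure_eq, ← Submodule.topologicalClosure_coe, htopcl]
      rfl
    exact this
  constructor
  · exact main Complex.I (by simp) (by simp)
  · have h2 := main (-Complex.I) (by simp) (by simp)
    convert h2 using 2
    ext f
    constructor
    · rintro ⟨ψ, hfin, hf⟩
      exact ⟨ψ, hfin, fun n => by rw [hf n]; ring⟩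
    · rintro ⟨ψ, hfin, hf⟩
      exact ⟨ψ, hfin, fun n => by rw [hf n]; ring⟩
end

section
/- Suppose in addition that Ã(4n+ε+2) ≥ 0 for every n ∈ ℤ. Then H is bounded below by the multiplication operator Λ̃·|v̂|·B̃(v̂)⁻¹; that is, for every finitely supported ψ : ℤ → ℂ, the inner product ⟨ψ, Hψ⟩ = ∑_{n∈ℤ} conj(ψ(n))·(Hψ)(n) is real and satisfies ⟨ψ, Hψ⟩ ≥ Λ̃ · ∑_{n∈ℤ} (|v_n|/B̃(v_n)) · |ψ(n)|². In particular, if Λ̃ > 0 then ⟨ψ, Hψ⟩ > 0 for every nonzero finitely supported ψ. -/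
private lemma aps_summable_aux {M : Type*} [AddCommMonoid M] [TopologicalSpace M]
    (f : ℤ → M) (S : Set ℤ) (hS : S.Finite) (h : ∀ n, n ∉ S → f n = 0) : Summable f :=
  summable_of_ne_finset_zero (s := hS.toFinset)
    (fun n hn => h n (fun hmem => hn (hS.mem_toFinset.mpr hmem)))

private lemma aps_normsq_aux (z : ℂ) : ((‖z‖ : ℝ) : ℂ) ^ 2 = (starRingEnd ℂ) z * z :=
  (RCLike.conj_mul z).symm

set_option maxHeartbeats 1000000 in
/-- H is bounded below by Λ̃·|v̂|·B̃(v̂)⁻¹ on finitely supported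
sequences: ⟨ψ, Hψ⟩ is real and ≥ Λ̃·∑ (|vₙ|/B̃(vₙ))·|ψ(n)|²; if Λ̃ > 0 it is
positive for nonzero ψ. -/
theorem aps_bounded_below_by_cosmological_term
    (G ε α Λ : ℝ) (hG : 0 < G) (hε : ε ∈ Set.Ioo (0 : ℝ) 4) (hΛ : 0 ≤ Λ)
    (A B : ℝ → ℝ)
    (hA : ∃ R > (0 : ℝ), ∀ v : ℝ, R ≤ |v| → A v = 3 * Real.pi * G / 4 * |v|)
    (hB : ∃ C₀ > (0 : ℝ), ∃ M₀ > (0 : ℝ), ∀ v : ℝ, M₀ ≤ |v| →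
      abs (|v| * B v - 1 - α / v ^ 2) ≤ C₀ / v ^ 4)
    (hBpos : ∀ n : ℤ, 0 < B (4 * (n : ℝ) + ε))
    (c d : ℤ → ℝ)
    (hc : ∀ n : ℤ, c n = A (4 * (n : ℝ) + ε + 2) /
      Real.sqrt (B (4 * (n : ℝ) + ε) * B (4 * ((n : ℝ) + 1) + ε)))
    (hd : ∀ n : ℤ, d n = (A (4 * (n : ℝ) + ε + 2) + A (4 * (n : ℝ) + ε - 2)
      + Λ * |4 * (n : ℝ) + ε|) / B (4 * (n : ℝ) + ε))
    (H : (ℤ → ℂ) → (ℤ → ℂ))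
    (hH : ∀ (ψ : ℤ → ℂ) (n : ℤ),
      H ψ n = -(c (n - 1) : ℂ) * ψ (n - 1) - (c n : ℂ) * ψ (n + 1) + (d n : ℂ) * ψ n)
    (hA2 : ∀ n : ℤ, 0 ≤ A (4 * (n : ℝ) + ε + 2)) :
    ∀ ψ : ℤ → ℂ, (Function.support ψ).Finite →
      ∃ r : ℝ,
        (∑' n : ℤ, (starRingEnd ℂ) (ψ n) * H ψ n) = (r : ℂ) ∧
        Λ * ∑' n : ℤ, |4 * (n : ℝ) + ε| / B (4 * (n : ℝ) + ε) * ‖ψ n‖ ^ 2 ≤ r ∧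
        (0 < Λ → ψ ≠ 0 → 0 < r) := by
  obtain ⟨hε0, hε4⟩ := hε
  intro ψ hfin
  classical
  have hb : ∀ n : ℤ, 0 < B (4 * (n : ℝ) + ε) := hBpos
  set sq : ℤ → ℝ := fun n => Real.sqrt (B (4 * (n : ℝ) + ε)) with hsqdef
  have hsq : ∀ n, 0 < sq n := fun n => Real.sqrt_pos.mpr (hb n)
  have hsqsq : ∀ n, sq n ^ 2 = B (4 * (n : ℝ) + ε) := fun n => Real.sq_sqrt (hb n).le
  set a : ℤ → ℝ := fun n => A (4 * (n : ℝ) + ε + 2) with hadef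
  have ha : ∀ n, 0 ≤ a n := hA2
  have haprev : ∀ n : ℤ, A (4 * (n : ℝ) + ε - 2) = a (n - 1) := by
    intro n
    have h1 : (4 * ((n - 1 : ℤ) : ℝ) + ε + 2) = 4 * (n : ℝ) + ε - 2 := by push_cast; ring
    simp only [hadef, h1]
  have hc' : ∀ n : ℤ, c n = a n / (sq n * sq (n + 1)) := by
    intro n
    have h1 : (4 * ((n : ℝ) + 1) + ε) = 4 * ((n + 1 : ℤ) : ℝ) + ε := by push_cast; ring
    simp only [hadef, hsqdef]
    rw [hc n, h1, Real.sqrt_mul (hb n).le]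
  have hd' : ∀ n : ℤ, d n = (a n + a (n - 1)) / B (4 * (n : ℝ) + ε)
      + Λ * (|4 * (n : ℝ) + ε| / B (4 * (n : ℝ) + ε)) := by
    intro n
    rw [hd n, haprev n]
    simp only [hadef]
    rw [add_div, mul_div_assoc]
  set φ : ℤ → ℂ := fun n => ψ n / (sq n : ℂ) with hφdef
  have hφnorm : ∀ n, ‖φ n‖ ^ 2 = ‖ψ n‖ ^ 2 / B (4 * (n : ℝ) + ε) := by
    intro n
    simp only [hφdef, norm_div, Complex.norm_real, Real.norm_eq_abs,
      abs_of_pos (hsq n), div_pow, hsqsq n]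
  have hsqne : ∀ n, (sq n : ℝ) ≠ 0 := fun n => (hsq n).ne'
  -- the basic building blocks
  set W : ℤ → ℂ := fun n => (c n : ℂ) * ((starRingEnd ℂ) (ψ n) * ψ (n + 1)) with hW
  set W' : ℤ → ℂ := fun n => (c n : ℂ) * ((starRingEnd ℂ) (ψ (n + 1)) * ψ n) with hW'
  set U : ℤ → ℂ := fun n => (a n : ℂ) * ((‖φ n‖ ^ 2 : ℝ) : ℂ) with hU
  set V : ℤ → ℂ := fun n => (a (n - 1) : ℂ) * ((‖φ n‖ ^ 2 : ℝ) : ℂ) with hV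
  set g : ℤ → ℝ := fun n => a n * ‖φ n - φ (n + 1)‖ ^ 2 with hg
  set q : ℤ → ℝ := fun n => |4 * (n : ℝ) + ε| / B (4 * (n : ℝ) + ε) * ‖ψ n‖ ^ 2 with hq
  have hqnonneg : ∀ n, 0 ≤ q n := fun n => by
    simp only [hq]
    exact mul_nonneg (div_nonneg (abs_nonneg _) (hb n).le) (sq_nonneg _)
  have hgnonneg : ∀ n, 0 ≤ g n := fun n => by
    simp only [hg]
    exact mul_nonneg (ha n) (sq_nonneg _)
  -- support facts and summability
  have hmem0 : ∀ n, n ∉ Function.support ψ → ψ n = 0 :=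
    fun n hn => Function.notMem_support.mp hn
  have sumW : Summable W :=
    aps_summable_aux W _ hfin (fun n hn => by simp only [hW, hmem0 n hn]; simp)
  have sumW' : Summable W' :=
    aps_summable_aux W' _ hfin (fun n hn => by simp only [hW', hmem0 n hn]; simp)
  have hφzero : ∀ n, ψ n = 0 → φ n = 0 := by
    intro n h
    simp only [hφdef, h, zero_div]
  have sumU : Summable U :=
    aps_summable_aux U _ hfin (fun n hn => by
      simp only [hU, hφzero n (hmem0 n hn)]; simp)
  have sumV : Summable V :=
    aps_summable_aux V _ hfin (fun n hn => by
      simp only [hV, hφzero n (hmem0 n hn)]; simp)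
  have sumq : Summable q :=
    aps_summable_aux q _ hfin (fun n hn => by simp only [hq, hmem0 n hn]; simp)
  have sumΛq : Summable (fun n => ((Λ * q n : ℝ) : ℂ)) :=
    aps_summable_aux _ _ hfin (fun n hn => by simp only [hq, hmem0 n hn]; simp)
  have sumWsh : Summable (fun n => W' (n - 1)) :=
    aps_summable_aux _ ((fun n => n + 1) '' Function.support ψ) (hfin.image _)
      (fun n hn => by
        have hψ : ψ (n - 1) = 0 := by
          by_contra h
          exact hn ⟨n - 1, h, by ring⟩
        simp only [hW', hψ]
        simp)
  -- pointwise decomposition of the quadratic form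
  have hT3 : ∀ n, (d n : ℂ) * ((‖ψ n‖ ^ 2 : ℝ) : ℂ) = U n + V n + ((Λ * q n : ℝ) : ℂ) := by
    intro n
    have hdr : d n * ‖ψ n‖ ^ 2 = a n * ‖φ n‖ ^ 2 + a (n - 1) * ‖φ n‖ ^ 2 + Λ * q n := by
      rw [hd' n, hφnorm n]
      simp only [hq]
      field_simp
    simp only [hU, hV]
    calc (d n : ℂ) * ((‖ψ n‖ ^ 2 : ℝ) : ℂ)
        = ((d n * ‖ψ n‖ ^ 2 : ℝ) : ℂ) := by push_cast; ring
      _ = ((a n * ‖φ n‖ ^ 2 + a (n - 1) * ‖φ n‖ ^ 2 + Λ * q n : ℝ) : ℂ) := by rw [hdr]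
      _ = _ := by push_cast; ring
  have hfpt : ∀ n : ℤ, (starRingEnd ℂ) (ψ n) * H ψ n
      = (-(W' (n - 1)) - W n) + (U n + V n + ((Λ * q n : ℝ) : ℂ)) := by
    intro n
    rw [hH ψ n]
    have h1 : -(W' (n - 1)) = -(c (n - 1) : ℂ) * ((starRingEnd ℂ) (ψ n) * ψ (n - 1)) := by
      simp only [hW', sub_add_cancel]
      ring
    have h2 : (starRingEnd ℂ) (ψ n) * ((d n : ℂ) * ψ n)
        = (d n : ℂ) * ((‖ψ n‖ ^ 2 : ℝ) : ℂ) := by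
      push_cast
      rw [aps_normsq_aux]
      ring
    calc (starRingEnd ℂ) (ψ n) *
          (-(c (n - 1) : ℂ) * ψ (n - 1) - (c n : ℂ) * ψ (n + 1) + (d n : ℂ) * ψ n)
        = -(c (n - 1) : ℂ) * ((starRingEnd ℂ) (ψ n) * ψ (n - 1))
          - (c n : ℂ) * ((starRingEnd ℂ) (ψ n) * ψ (n + 1))
          + (starRingEnd ℂ) (ψ n) * ((d n : ℂ) * ψ n) := by ring
      _ = -(W' (n - 1)) - W n + (U n + V n + ((Λ * q n : ℝ) : ℂ)) := by
          rw [← h1, h2, hT3 n]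
  -- the pointwise identity for g
  have hGpt : ∀ n, ((g n : ℝ) : ℂ) = U n + V (n + 1) - W n - W' n := by
    intro n
    have h1 : (sq n : ℂ) ≠ 0 := by exact_mod_cast hsqne n
    have h2 : (sq (n + 1) : ℂ) ≠ 0 := by exact_mod_cast hsqne (n + 1)
    have e1 : U n = (a n : ℂ) * ((starRingEnd ℂ) (φ n) * φ n) := by
      simp only [hU]
      push_cast
      rw [aps_normsq_aux]
    have e2 : V (n + 1) = (a n : ℂ) * ((starRingEnd ℂ) (φ (n + 1)) * φ (n + 1)) := by
      simp only [hV, add_sub_cancel_right]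
      push_cast
      rw [aps_normsq_aux]
    have e3 : (a n : ℂ) * ((starRingEnd ℂ) (φ n) * φ (n + 1)) = W n := by
      simp only [hW, hφdef, map_div₀, Complex.conj_ofReal]
      rw [hc' n]
      push_cast
      field_simp
      try ring
      try simp
    have e4 : (a n : ℂ) * ((starRingEnd ℂ) (φ (n + 1)) * φ n) = W' n := by
      simp only [hW', hφdef, map_div₀, Complex.conj_ofReal]
      rw [hc' n]
      push_cast
      field_simp
      try ring
      try simp
    have e5 : ((g n : ℝ) : ℂ) = (a n : ℂ) *
        (((starRingEnd ℂ) (φ n) - (starRingEnd ℂ) (φ (n + 1))) * (φ n - φ (n + 1))) := by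
      simp only [hg]
      push_cast
      rw [aps_normsq_aux, map_sub]
    linear_combination e5 - e1 - e2 - e3 - e4
  -- summability of the pieces appearing in hfpt
  have sum1 : Summable (fun n => -(W' (n - 1)) - W n) := (sumWsh.neg.sub sumW)
  have sum2 : Summable (fun n => U n + V n + ((Λ * q n : ℝ) : ℂ)) :=
    (sumU.add sumV).add sumΛq
  -- compute the total sum
  have key : (∑' n : ℤ, (starRingEnd ℂ) (ψ n) * H ψ n)
      = ((∑' n : ℤ, g n : ℝ) : ℂ) + ((Λ * ∑' n : ℤ, q n : ℝ) : ℂ) := by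
    have step1 : (∑' n : ℤ, (starRingEnd ℂ) (ψ n) * H ψ n)
        = (∑' n : ℤ, (-(W' (n - 1)) - W n)) + ∑' n : ℤ, (U n + V n + ((Λ * q n : ℝ) : ℂ)) := by
      rw [← Summable.tsum_add sum1 sum2]
      exact tsum_congr hfpt
    have hshift : (∑' n : ℤ, W' (n - 1)) = ∑' n : ℤ, W' n :=
      (Equiv.subRight (1 : ℤ)).tsum_eq W'
    have hVshift : (∑' n : ℤ, V (n + 1)) = ∑' n : ℤ, V n :=
      (Equiv.addRight (1 : ℤ)).tsum_eq V
    have sumVsh : Summable (fun n => V (n + 1)) :=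
      (Equiv.addRight (1 : ℤ)).summable_iff.mpr sumV
    have stepG : ((∑' n : ℤ, g n : ℝ) : ℂ)
        = (∑' n : ℤ, U n) + (∑' n : ℤ, V n) - (∑' n : ℤ, W n) - ∑' n : ℤ, W' n := by
      rw [Complex.ofReal_tsum]
      rw [tsum_congr hGpt]
      rw [Summable.tsum_sub (((sumU.add sumVsh).sub sumW)) sumW',
        Summable.tsum_sub (sumU.add sumVsh) sumW, Summable.tsum_add sumU sumVsh, hVshift]
    have stepΛ : (∑' n : ℤ, ((Λ * q n : ℝ) : ℂ)) = ((Λ * ∑' n : ℤ, q n : ℝ) : ℂ) := by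
      rw [← Complex.ofReal_tsum, tsum_mul_left]
    rw [step1, Summable.tsum_sub sumWsh.neg sumW, tsum_neg, hshift,
      Summable.tsum_add (sumU.add sumV) sumΛq, Summable.tsum_add sumU sumV, stepΛ, stepG]
    ring
  refine ⟨(∑' n : ℤ, g n) + Λ * ∑' n : ℤ, q n, ?_, ?_, ?_⟩
  · rw [key]
    push_cast
    ring
  · have hgt : 0 ≤ ∑' n : ℤ, g n := tsum_nonneg hgnonneg
    have hqs : (∑' n : ℤ, |4 * (n : ℝ) + ε| / B (4 * (n : ℝ) + ε) * ‖ψ n‖ ^ 2)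
        = ∑' n : ℤ, q n := tsum_congr (fun n => by simp only [hq])
    rw [hqs]
    linarith
  · intro hΛpos hψne
    obtain ⟨m, hm⟩ := Function.ne_iff.mp hψne
    have hvpos : 0 < |4 * (m : ℝ) + ε| := by
      rcases le_or_gt 0 (m : ℝ) with h | h
      · exact abs_pos.mpr (ne_of_gt (by nlinarith))
      · have hm0 : m < 0 := by exact_mod_cast h
        have hm1 : m ≤ -1 := by omega
        have hm1' : (m : ℝ) ≤ -1 := by exact_mod_cast hm1
        exact abs_pos.mpr (ne_of_lt (by nlinarith))
    have hqm : 0 < q m := by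
      have hψm : 0 < ‖ψ m‖ ^ 2 := pow_pos (norm_pos_iff.mpr hm) 2
      simp only [hq]
      exact mul_pos (div_pos hvpos (hb m)) hψm
    have hle : q m ≤ ∑' n : ℤ, q n := Summable.le_tsum sumq m (fun j _ => hqnonneg j)
    have hgt : 0 ≤ ∑' n : ℤ, g n := tsum_nonneg hgnonneg
    nlinarith
end

section
/- Suppose Λ̃ > 0. Define, for finitely supported ψ : ℤ → ℂ, the operators (H₀ψ)(n) = d(n)ψ(n) and (H₁ψ)(n) = −c(n−1)ψ(n−1) − c(n)ψ(n+1), so that H = H₀ + H₁. Then there exists a constant β' > 0 such that for every finitely supported ψ : ℤ → ℂ one has ‖H₁ψ‖² ≤ ‖H₀ψ‖² + β'·‖ψ‖², where ‖·‖ denotes the ℓ²(ℤ, ℂ) norm. -/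
lemma aps_aux_key (K Λ δ t : ℝ) (hK : 0 < K) (hδ0 : 0 < δ) (hδh : δ < 1/2)
    (hδid : δ * (4 * K + Λ) = Λ / 2) (ht : 16 ≤ t) (h54 : 54 * K ≤ Λ * t) :
    2 * K * (1 + δ) * (t + 4) ^ 2 ≤ (2 * K + Λ) * (1 - δ) * t ^ 2 := by
  have h1 : δ * (8*t+16) ≤ (1/2) * (8*t+16) :=
    mul_le_mul_of_nonneg_right hδh.le (by linarith)
  have h2 : (1+δ)*(8*t+16) ≤ (3/2)*(9*t) := by nlinarith
  have h3 : 2*K*((1+δ)*(8*t+16)) ≤ 2*K*((3/2)*(9*t)) :=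
    mul_le_mul_of_nonneg_left h2 (by linarith)
  have h4 : 27*K*t ≤ (Λ/2)*t^2 := by
    nlinarith [mul_nonneg (by linarith : (0:ℝ) ≤ t) (by linarith : (0:ℝ) ≤ Λ*t - 54*K)]
  have h5 : δ*(4*K+Λ)*t^2 = (Λ/2)*t^2 := by rw [hδid]
  linarith [h3, h4, h5]

lemma aps_aux_B (δ C₀ α w bv : ℝ) (hδ0 : 0 < δ) (hC₀ : 0 < C₀) (hw1 : 1 ≤ w)
    (hwge : (|α| + C₀) / δ ≤ w ^ 2)
    (hbc : |w * bv - 1 - α / w ^ 2| ≤ C₀ / w ^ 4) :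
    (1 - δ) / w ≤ bv ∧ bv ≤ (1 + δ) / w := by
  have hw0 : 0 < w := by linarith
  have hw2pos : 0 < w ^ 2 := by positivity
  have hw21 : 1 ≤ w ^ 2 := by nlinarith
  have hαC : (|α| + C₀) / w ^ 2 ≤ δ := by
    rw [div_le_iff₀ hw2pos]
    have := (div_le_iff₀ hδ0).mp hwge
    linarith
  have hC4 : C₀ / w ^ 4 ≤ C₀ / w ^ 2 := by
    have hww : w ^ 2 ≤ w ^ 4 := by
      nlinarith [mul_nonneg (sq_nonneg w) (by linarith : (0:ℝ) ≤ w ^ 2 - 1)]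
    rw [div_le_div_iff₀ (by positivity) (by positivity)]
    nlinarith [mul_le_mul_of_nonneg_left hww hC₀.le]
  have hsum : |α| / w ^ 2 + C₀ / w ^ 2 ≤ δ := by
    rw [← add_div |α| C₀ (w ^ 2)]; exact hαC
  have hαlo : -|α| / w ^ 2 ≤ α / w ^ 2 := by gcongr; exact neg_abs_le α
  have hαhi : α / w ^ 2 ≤ |α| / w ^ 2 := by gcongr; exact le_abs_self α
  obtain ⟨hlo, hhi⟩ := abs_le.mp hbc
  have hneg : -(|α| / w ^ 2) = -|α| / w ^ 2 := by ring
  constructor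
  · rw [div_le_iff₀ hw0, mul_comm bv w]
    linarith [hneg ▸ hαlo]
  · rw [le_div_iff₀ hw0, mul_comm bv w]
    linarith

set_option maxHeartbeats 1000000 in
/-- With Λ̃ > 0, for H = H₀ + H₁ (H₀ the diagonal part, H₁ the
off-diagonal part) there is β' > 0 with ‖H₁ψ‖² ≤ ‖H₀ψ‖² + β'·‖ψ‖² for all
finitely supported ψ. -/
theorem aps_offdiagonal_dominated_by_diagonal
    (G ε α Λ : ℝ) (hG : 0 < G) (hε : ε ∈ Set.Ioo (0 : ℝ) 4) (hΛ : 0 < Λ)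
    (A B : ℝ → ℝ)
    (hA : ∃ R > (0 : ℝ), ∀ v : ℝ, R ≤ |v| → A v = 3 * Real.pi * G / 4 * |v|)
    (hB : ∃ C₀ > (0 : ℝ), ∃ M₀ > (0 : ℝ), ∀ v : ℝ, M₀ ≤ |v| →
      abs (|v| * B v - 1 - α / v ^ 2) ≤ C₀ / v ^ 4)
    (hBpos : ∀ n : ℤ, 0 < B (4 * (n : ℝ) + ε))
    (c d : ℤ → ℝ)
    (hc : ∀ n : ℤ, c n = A (4 * (n : ℝ) + ε + 2) /
      Real.sqrt (B (4 * (n : ℝ) + ε) * B (4 * ((n : ℝ) + 1) + ε)))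
    (hd : ∀ n : ℤ, d n = (A (4 * (n : ℝ) + ε + 2) + A (4 * (n : ℝ) + ε - 2)
      + Λ * |4 * (n : ℝ) + ε|) / B (4 * (n : ℝ) + ε))
    (H : (ℤ → ℂ) → (ℤ → ℂ))
    (hH : ∀ (ψ : ℤ → ℂ) (n : ℤ),
      H ψ n = -(c (n - 1) : ℂ) * ψ (n - 1) - (c n : ℂ) * ψ (n + 1) + (d n : ℂ) * ψ n)
    (H₀ H₁ : (ℤ → ℂ) → (ℤ → ℂ))
    (hH₀ : ∀ (ψ : ℤ → ℂ) (n : ℤ), H₀ ψ n = (d n : ℂ) * ψ n)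
    (hH₁ : ∀ (ψ : ℤ → ℂ) (n : ℤ),
      H₁ ψ n = -(c (n - 1) : ℂ) * ψ (n - 1) - (c n : ℂ) * ψ (n + 1)) :
    ∃ β' > (0 : ℝ), ∀ ψ : ℤ → ℂ, (Function.support ψ).Finite →
      (∑' n : ℤ, ‖H₁ ψ n‖ ^ 2) ≤ (∑' n : ℤ, ‖H₀ ψ n‖ ^ 2) + β' * ∑' n : ℤ, ‖ψ n‖ ^ 2 := by
  classical
  obtain ⟨hε0, hε4⟩ := hε
  obtain ⟨R, hR, hAR⟩ := hA
  obtain ⟨C₀, hC₀, M₀, hM₀, hBc⟩ := hB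
  have hπ : 0 < Real.pi := Real.pi_pos
  obtain ⟨K, hKdef⟩ : ∃ x : ℝ, 3 * Real.pi * G / 4 = x := ⟨_, rfl⟩
  have hK : 0 < K := by rw [← hKdef]; positivity
  rw [hKdef] at hAR
  obtain ⟨δ, hδdef⟩ : ∃ x : ℝ, Λ / (2 * (4 * K + Λ)) = x := ⟨_, rfl⟩
  have hδ0 : 0 < δ := by rw [← hδdef]; positivity
  have hδhalf : δ < 1 / 2 := by
    rw [← hδdef, div_lt_iff₀ (by positivity)]
    nlinarith
  have hδid : δ * (4 * K + Λ) = Λ / 2 := by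
    rw [← hδdef]; field_simp
  obtain ⟨T, hTdef⟩ : ∃ x : ℝ,
      (R + 4) + (M₀ + 4) + ((|α| + C₀) / δ + 5) + 16 + 54 * K / Λ = x := ⟨_, rfl⟩
  have hp3 : (0:ℝ) ≤ (|α| + C₀) / δ := by positivity
  have hp5 : (0:ℝ) < 54 * K / Λ := by positivity
  have hT1 : R + 4 ≤ T := by rw [← hTdef]; linarith
  have hT2 : M₀ + 4 ≤ T := by rw [← hTdef]; linarith
  have hT3 : (|α| + C₀) / δ + 5 ≤ T := by rw [← hTdef]; linarith
  have hT4 : (16:ℝ) ≤ T := by rw [← hTdef]; linarith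
  have hT5 : 54 * K / Λ ≤ T := by rw [← hTdef]; linarith
  -- bounds on B in the asymptotic regime
  have hBbnd : ∀ v : ℝ, T - 4 ≤ |v| → (1 - δ) / |v| ≤ B v ∧ B v ≤ (1 + δ) / |v| := by
    intro v hv
    have hv1 : 1 ≤ |v| := by linarith
    have hvM : M₀ ≤ |v| := by linarith
    have hv2 : v ^ 2 = |v| ^ 2 := (sq_abs v).symm
    have hv4 : v ^ 4 = |v| ^ 4 := by
      have h1 : |v| ^ 4 = |v ^ 4| := (abs_pow v 4).symm
      rw [h1, abs_of_nonneg (by positivity)]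
    have hbc := hBc v hvM
    rw [hv2, hv4] at hbc
    apply aps_aux_B δ C₀ α |v| (B v) hδ0 hC₀ hv1 ?_ hbc
    nlinarith [sq_nonneg (|v| - 1)]
  -- helper: lower bound on |x + y|
  have habs : ∀ x y : ℝ, |x| - |y| ≤ |x + y| := by
    intro x y
    have h := abs_add_le (x + y) (-y)
    rw [add_neg_cancel_right, abs_neg] at h
    linarith
  -- the key pointwise inequality in the asymptotic regime
  have hkey : ∀ n : ℤ, T ≤ |4 * (n : ℝ) + ε| →
      2 * c n ^ 2 + 2 * c (n - 1) ^ 2 ≤ d n ^ 2 := by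
    intro n hn
    have hcn_eq := hc n
    have hcm_eq := hc (n - 1)
    have hdn_eq := hd n
    have hBu_pos := hBpos n
    have hBu4_pos := hBpos (n + 1)
    have hBum4_pos := hBpos (n - 1)
    push_cast at hcm_eq hBu4_pos hBum4_pos
    obtain ⟨u, hu⟩ : ∃ x : ℝ, 4 * (n : ℝ) + ε = x := ⟨_, rfl⟩
    have e1 : 4 * ((n : ℝ) + 1) + ε = u + 4 := by rw [← hu]; ring
    have e2 : 4 * ((n : ℝ) - 1) + ε + 2 = u - 2 := by rw [← hu]; ring
    have e3 : 4 * ((n : ℝ) - 1) + ε = u - 4 := by rw [← hu]; ring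
    have e4 : 4 * ((n : ℝ) - 1 + 1) + ε = u := by rw [← hu]; ring
    rw [hu] at hn hcn_eq hdn_eq hBu_pos
    rw [e1] at hcn_eq hBu4_pos
    rw [e2, e3, e4] at hcm_eq
    rw [e3] at hBum4_pos
    obtain ⟨t, htdef⟩ : ∃ x : ℝ, |u| = x := ⟨_, rfl⟩
    rw [htdef] at hn
    have ht16 : 16 ≤ t := le_trans hT4 hn
    have htpos : 0 < t := by linarith
    have hδ1 : 0 < 1 - δ := by linarith
    -- bounds on the absolute values of shifts
    have hb1 : t - 2 ≤ |u + 2| ∧ |u + 2| ≤ t + 2 := by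
      constructor
      · have := habs u 2; rw [abs_two, htdef] at this; linarith
      · have := abs_add_le u 2; rw [abs_two, htdef] at this; linarith
    have em2 : u + -2 = u - 2 := by ring
    have hb2 : t - 2 ≤ |u - 2| ∧ |u - 2| ≤ t + 2 := by
      constructor
      · have := habs u (-2); rw [abs_neg, abs_two, htdef, em2] at this; linarith
      · have := abs_add_le u (-2); rw [abs_neg, abs_two, htdef, em2] at this; linarith
    have hb3 : t - 4 ≤ |u + 4| ∧ |u + 4| ≤ t + 4 := by
      have h4 : |(4:ℝ)| = 4 := by norm_num
      constructor
      · have := habs u 4; rw [h4, htdef] at this; linarith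
      · have := abs_add_le u 4; rw [h4, htdef] at this; linarith
    have em4 : u + -4 = u - 4 := by ring
    have hb4 : t - 4 ≤ |u - 4| ∧ |u - 4| ≤ t + 4 := by
      have h4 : |(-4:ℝ)| = 4 := by norm_num
      constructor
      · have := habs u (-4); rw [h4, htdef, em4] at this; linarith
      · have := abs_add_le u (-4); rw [h4, htdef, em4] at this; linarith
    have hb5 : 2 * t ≤ |u + 2| + |u - 2| := by
      have h := abs_add_le (u + 2) (u - 2)
      have e : (u + 2) + (u - 2) = 2 * u := by ring
      rw [e, abs_mul, abs_two, htdef] at h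
      linarith
    -- A values
    have hA1 : A (u + 2) = K * |u + 2| := hAR _ (by linarith [hb1.1])
    have hA2 : A (u - 2) = K * |u - 2| := hAR _ (by linarith [hb2.1])
    -- B values
    have hBu := hBbnd u (by rw [htdef]; linarith)
    have hBu4 := hBbnd (u + 4) (by linarith [hb3.1])
    have hBum4 := hBbnd (u - 4) (by linarith [hb4.1])
    rw [htdef] at hBu
    -- lower bounds for B products
    have l1 : (1 - δ) / (t + 4) ≤ B u := by
      refine le_trans ?_ hBu.1
      gcongr <;> linarith
    have l2 : (1 - δ) / (t + 4) ≤ B (u + 4) := by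
      refine le_trans ?_ hBu4.1
      gcongr <;> linarith [hb3.1, hb3.2]
    have l3 : (1 - δ) / (t + 4) ≤ B (u - 4) := by
      refine le_trans ?_ hBum4.1
      gcongr <;> linarith [hb4.1, hb4.2]
    have hdivsq : (1 - δ) ^ 2 / (t + 4) ^ 2 = ((1 - δ) / (t + 4)) * ((1 - δ) / (t + 4)) := by
      rw [← div_pow, pow_two]
    have hBl1 : (1 - δ) ^ 2 / (t + 4) ^ 2 ≤ B u * B (u + 4) := by
      rw [hdivsq]
      exact mul_le_mul l1 l2 (by apply div_nonneg <;> linarith) hBu_pos.le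
    have hBl2 : (1 - δ) ^ 2 / (t + 4) ^ 2 ≤ B (u - 4) * B u := by
      rw [hdivsq]
      exact mul_le_mul l3 l1 (by apply div_nonneg <;> linarith) hBum4_pos.le
    -- c n bound
    have hcn : c n ^ 2 ≤ K ^ 2 * (t + 4) ^ 4 / (1 - δ) ^ 2 := by
      have hprod : 0 < B u * B (u + 4) := mul_pos hBu_pos hBu4_pos
      have hcval : c n ^ 2 = (K * |u + 2|) ^ 2 / (B u * B (u + 4)) := by
        rw [hcn_eq, hA1, div_pow, Real.sq_sqrt hprod.le]
      rw [hcval]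
      have hnum : (K * |u + 2|) ^ 2 ≤ K ^ 2 * (t + 4) ^ 2 := by
        rw [mul_pow]
        exact mul_le_mul_of_nonneg_left
          (pow_le_pow_left₀ (abs_nonneg _) (by linarith [hb1.2]) 2) (by positivity)
      refine le_trans (div_le_div₀ (by positivity) hnum (by positivity) hBl1) ?_
      rw [div_div_eq_mul_div]
      apply le_of_eq
      ring
    -- c (n-1) bound
    have hcm : c (n - 1) ^ 2 ≤ K ^ 2 * (t + 4) ^ 4 / (1 - δ) ^ 2 := by
      have hprod : 0 < B (u - 4) * B u := mul_pos hBum4_pos hBu_pos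
      have hcval : c (n - 1) ^ 2 = (K * |u - 2|) ^ 2 / (B (u - 4) * B u) := by
        rw [hcm_eq, hA2, div_pow, Real.sq_sqrt hprod.le]
      rw [hcval]
      have hnum : (K * |u - 2|) ^ 2 ≤ K ^ 2 * (t + 4) ^ 2 := by
        rw [mul_pow]
        exact mul_le_mul_of_nonneg_left
          (pow_le_pow_left₀ (abs_nonneg _) (by linarith [hb2.2]) 2) (by positivity)
      refine le_trans (div_le_div₀ (by positivity) hnum (by positivity) hBl2) ?_
      rw [div_div_eq_mul_div]
      apply le_of_eq
      ring
    -- d n lower bound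
    have hdn : (2 * K + Λ) * t ^ 2 / (1 + δ) ≤ d n := by
      have hnum : (2 * K + Λ) * t ≤ K * |u + 2| + K * |u - 2| + Λ * t := by
        have := mul_le_mul_of_nonneg_left hb5 hK.le
        linarith [this]
      have h2 : (2 * K + Λ) * t / ((1 + δ) / t) ≤ (K * |u + 2| + K * |u - 2| + Λ * t) / B u :=
        div_le_div₀ (by positivity) hnum hBu_pos hBu.2
      have e : (2 * K + Λ) * t / ((1 + δ) / t) = (2 * K + Λ) * t ^ 2 / (1 + δ) := by
        rw [div_div_eq_mul_div]; ring
      rw [hdn_eq, hA1, hA2, htdef]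
      rw [e] at h2
      exact h2
    have hdn2 : ((2 * K + Λ) * t ^ 2 / (1 + δ)) ^ 2 ≤ d n ^ 2 :=
      pow_le_pow_left₀ (by positivity) hdn 2
    -- the key algebraic inequality
    have h54 : 54 * K ≤ Λ * t := by
      have := (div_le_iff₀ hΛ).mp (le_trans hT5 hn)
      linarith
    have key := aps_aux_key K Λ δ t hK hδ0 hδhalf hδid ht16 h54
    have key2 : (2 * K * (1 + δ) * (t + 4) ^ 2) ^ 2 ≤ ((2 * K + Λ) * (1 - δ) * t ^ 2) ^ 2 :=
      pow_le_pow_left₀ (by positivity) key 2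
    have hfrac : 4 * (K ^ 2 * (t + 4) ^ 4 / (1 - δ) ^ 2) ≤ ((2 * K + Λ) * t ^ 2 / (1 + δ)) ^ 2 := by
      rw [div_pow,
        show (4:ℝ) * (K ^ 2 * (t + 4) ^ 4 / (1 - δ) ^ 2)
          = (4 * (K ^ 2 * (t + 4) ^ 4)) / (1 - δ) ^ 2 by ring,
        div_le_div_iff₀ (by positivity) (by positivity)]
      calc 4 * (K ^ 2 * (t + 4) ^ 4) * (1 + δ) ^ 2
          = (2 * K * (1 + δ) * (t + 4) ^ 2) ^ 2 := by ring
        _ ≤ ((2 * K + Λ) * (1 - δ) * t ^ 2) ^ 2 := key2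
        _ = ((2 * K + Λ) * t ^ 2) ^ 2 * (1 - δ) ^ 2 := by ring
    linarith [hcn, hcm, hdn2, hfrac]
  -- exceptional set is finite
  have hSfin : {n : ℤ | ¬ T ≤ |4 * (n : ℝ) + ε|}.Finite := by
    apply Set.Finite.subset (Set.finite_Icc (-⌈T⌉) ⌈T⌉)
    intro n hn
    simp only [Set.mem_setOf_eq, not_le] at hn
    have h4 : |4 * (n : ℝ)| ≤ |4 * (n : ℝ) + ε| + ε := by
      have := habs (4 * (n : ℝ)) ε
      rw [abs_of_pos hε0] at this
      linarith
    have h5 : 4 * |(n : ℝ)| < T + 4 := by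
      have e : |4 * (n : ℝ)| = 4 * |(n : ℝ)| := by rw [abs_mul]; norm_num
      rw [e] at h4; linarith
    have h6 : |(n : ℝ)| ≤ T := by linarith
    have h7 : (n : ℝ) ≤ T := le_trans (le_abs_self _) h6
    have h8 : -T ≤ (n : ℝ) := by
      have := neg_abs_le (n : ℝ); linarith
    constructor
    · have : ((-⌈T⌉ : ℤ) : ℝ) ≤ (n : ℝ) := by
        push_cast
        linarith [Int.le_ceil T]
      exact_mod_cast this
    · have : (n : ℝ) ≤ ((⌈T⌉ : ℤ) : ℝ) := le_trans h7 (Int.le_ceil T)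
      exact_mod_cast this
  set S : Finset ℤ := hSfin.toFinset with hS
  set β' : ℝ := 1 + ∑ n ∈ S, |2 * c n ^ 2 + 2 * c (n - 1) ^ 2 - d n ^ 2| with hβ
  have hsumnn : 0 ≤ ∑ n ∈ S, |2 * c n ^ 2 + 2 * c (n - 1) ^ 2 - d n ^ 2| :=
    Finset.sum_nonneg fun _ _ => abs_nonneg _
  have hβpos : 0 < β' := by rw [hβ]; linarith
  have hg : ∀ n : ℤ, 2 * c n ^ 2 + 2 * c (n - 1) ^ 2 ≤ d n ^ 2 + β' := by
    intro n
    by_cases hn : T ≤ |4 * (n : ℝ) + ε|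
    · linarith [hkey n hn]
    · have hnS : n ∈ S := by rw [hS, Set.Finite.mem_toFinset]; exact hn
      have h1 : |2 * c n ^ 2 + 2 * c (n - 1) ^ 2 - d n ^ 2| ≤
          ∑ m ∈ S, |2 * c m ^ 2 + 2 * c (m - 1) ^ 2 - d m ^ 2| :=
        Finset.single_le_sum (f := fun m => |2 * c m ^ 2 + 2 * c (m - 1) ^ 2 - d m ^ 2|)
          (fun _ _ => abs_nonneg _) hnS
      have h2 := le_abs_self (2 * c n ^ 2 + 2 * c (n - 1) ^ 2 - d n ^ 2)
      rw [hβ]; linarith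
  refine ⟨β', hβpos, ?_⟩
  intro ψ hψ
  set S0 : Finset ℤ := hψ.toFinset with hS0
  have hψ0 : ∀ n : ℤ, n ∉ S0 → ψ n = 0 := by
    intro n hn
    by_contra h
    exact hn (by rw [hS0, Set.Finite.mem_toFinset]; exact h)
  have s1 : Summable (fun n : ℤ => ‖ψ n‖ ^ 2) :=
    summable_of_ne_finset_zero (s := S0) fun n hn => by rw [hψ0 n hn]; simp
  have s2 : Summable (fun n : ℤ => (d n) ^ 2 * ‖ψ n‖ ^ 2) :=
    summable_of_ne_finset_zero (s := S0) fun n hn => by rw [hψ0 n hn]; simp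
  have s3 : Summable (fun n : ℤ => 2 * (c n) ^ 2 * ‖ψ n‖ ^ 2) :=
    summable_of_ne_finset_zero (s := S0) fun n hn => by rw [hψ0 n hn]; simp
  have s3' : Summable (fun n : ℤ => 2 * (c (n - 1)) ^ 2 * ‖ψ n‖ ^ 2) :=
    summable_of_ne_finset_zero (s := S0) fun n hn => by rw [hψ0 n hn]; simp
  have s3'' : Summable (fun n : ℤ => (2 * (c n) ^ 2 + 2 * (c (n - 1)) ^ 2) * ‖ψ n‖ ^ 2) :=
    summable_of_ne_finset_zero (s := S0) fun n hn => by rw [hψ0 n hn]; simp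
  have s2' : Summable (fun n : ℤ => (d n) ^ 2 * ‖ψ n‖ ^ 2 + β' * ‖ψ n‖ ^ 2) :=
    s2.add (s1.mul_left β')
  have s4 : Summable (fun n : ℤ => 2 * (c (n - 1)) ^ 2 * ‖ψ (n - 1)‖ ^ 2) :=
    summable_of_ne_finset_zero (s := S0.image (· + 1)) fun n hn => by
      have h : ψ (n - 1) = 0 := by
        apply hψ0
        intro h
        exact hn (Finset.mem_image.mpr ⟨n - 1, h, by ring⟩)
      rw [h]; simp
  have s5 : Summable (fun n : ℤ => 2 * (c n) ^ 2 * ‖ψ (n + 1)‖ ^ 2) :=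
    summable_of_ne_finset_zero (s := S0.image (· - 1)) fun n hn => by
      have h : ψ (n + 1) = 0 := by
        apply hψ0
        intro h
        exact hn (Finset.mem_image.mpr ⟨n + 1, h, by ring⟩)
      rw [h]; simp
  have s6 : Summable (fun n : ℤ => ‖H₁ ψ n‖ ^ 2) :=
    summable_of_ne_finset_zero (s := (S0.image (· + 1)) ∪ (S0.image (· - 1))) fun n hn => by
      rw [Finset.mem_union] at hn
      push_neg at hn
      have h1 : ψ (n - 1) = 0 := by
        apply hψ0; intro h
        exact hn.1 (Finset.mem_image.mpr ⟨n - 1, h, by ring⟩)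
      have h2 : ψ (n + 1) = 0 := by
        apply hψ0; intro h
        exact hn.2 (Finset.mem_image.mpr ⟨n + 1, h, by ring⟩)
      rw [hH₁, h1, h2]; simp
  have step1 : ∀ n : ℤ, ‖H₁ ψ n‖ ^ 2 ≤
      2 * (c (n - 1)) ^ 2 * ‖ψ (n - 1)‖ ^ 2 + 2 * (c n) ^ 2 * ‖ψ (n + 1)‖ ^ 2 := by
    intro n
    rw [hH₁]
    have h1 : ‖-(c (n - 1) : ℂ) * ψ (n - 1) - (c n : ℂ) * ψ (n + 1)‖ ≤
        |c (n - 1)| * ‖ψ (n - 1)‖ + |c n| * ‖ψ (n + 1)‖ := by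
      calc ‖-(c (n - 1) : ℂ) * ψ (n - 1) - (c n : ℂ) * ψ (n + 1)‖
          ≤ ‖-(c (n - 1) : ℂ) * ψ (n - 1)‖ + ‖(c n : ℂ) * ψ (n + 1)‖ := norm_sub_le _ _
        _ = |c (n - 1)| * ‖ψ (n - 1)‖ + |c n| * ‖ψ (n + 1)‖ := by simp
    calc ‖-(c (n - 1) : ℂ) * ψ (n - 1) - (c n : ℂ) * ψ (n + 1)‖ ^ 2
        ≤ (|c (n - 1)| * ‖ψ (n - 1)‖ + |c n| * ‖ψ (n + 1)‖) ^ 2 :=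
          pow_le_pow_left₀ (norm_nonneg _) h1 2
      _ ≤ 2 * (|c (n - 1)| * ‖ψ (n - 1)‖) ^ 2 + 2 * (|c n| * ‖ψ (n + 1)‖) ^ 2 := by
          nlinarith [sq_nonneg (|c (n - 1)| * ‖ψ (n - 1)‖ - |c n| * ‖ψ (n + 1)‖)]
      _ = 2 * (c (n - 1)) ^ 2 * ‖ψ (n - 1)‖ ^ 2 + 2 * (c n) ^ 2 * ‖ψ (n + 1)‖ ^ 2 := by
          rw [mul_pow, mul_pow, sq_abs, sq_abs]; ring
  calc (∑' n : ℤ, ‖H₁ ψ n‖ ^ 2)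
      ≤ ∑' n : ℤ, (2 * (c (n - 1)) ^ 2 * ‖ψ (n - 1)‖ ^ 2 + 2 * (c n) ^ 2 * ‖ψ (n + 1)‖ ^ 2) :=
        s6.tsum_le_tsum step1 (s4.add s5)
    _ = (∑' n : ℤ, 2 * (c (n - 1)) ^ 2 * ‖ψ (n - 1)‖ ^ 2)
        + ∑' n : ℤ, 2 * (c n) ^ 2 * ‖ψ (n + 1)‖ ^ 2 := s4.tsum_add s5
    _ = (∑' n : ℤ, 2 * (c n) ^ 2 * ‖ψ n‖ ^ 2)
        + ∑' n : ℤ, 2 * (c (n - 1)) ^ 2 * ‖ψ n‖ ^ 2 := by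
        congr 1
        · have := (Equiv.subRight (1 : ℤ)).tsum_eq (fun m => 2 * (c m) ^ 2 * ‖ψ m‖ ^ 2)
          simpa using this
        · have := (Equiv.addRight (1 : ℤ)).tsum_eq (fun m => 2 * (c (m - 1)) ^ 2 * ‖ψ m‖ ^ 2)
          simpa using this
    _ = ∑' n : ℤ, (2 * (c n) ^ 2 + 2 * (c (n - 1)) ^ 2) * ‖ψ n‖ ^ 2 := by
        rw [← s3.tsum_add s3']
        apply tsum_congr
        intro n
        ring
    _ ≤ ∑' n : ℤ, ((d n) ^ 2 * ‖ψ n‖ ^ 2 + β' * ‖ψ n‖ ^ 2) := by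
        apply s3''.tsum_le_tsum _ s2'
        intro n
        have h := mul_le_mul_of_nonneg_right (hg n) (by positivity : (0:ℝ) ≤ ‖ψ n‖ ^ 2)
        linarith [h]
    _ = (∑' n : ℤ, (d n) ^ 2 * ‖ψ n‖ ^ 2) + β' * ∑' n : ℤ, ‖ψ n‖ ^ 2 := by
        rw [s2.tsum_add (s1.mul_left β'), tsum_mul_left]
    _ = (∑' n : ℤ, ‖H₀ ψ n‖ ^ 2) + β' * ∑' n : ℤ, ‖ψ n‖ ^ 2 := by
        congr 1
        apply tsum_congr
        intro n
        rw [hH₀]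
        rw [norm_mul, Complex.norm_real, Real.norm_eq_abs, mul_pow, sq_abs]
end

section
/- The concrete APS functions satisfy the general asymptotic hypotheses with α = 5/9: (a) for every real v with |v| ≥ 1, A(v) = (3πG/4)|v|, i.e. A(v) − (3πG/4)|v| has compact support; and (b) there exist constants C > 0 and M > 0 such that for every real v with |v| ≥ M one has | |v|·B(v) − 1 − (5/9)/v² | ≤ C/v⁴. -/
lemma cube_root_cube (x : ℝ) (hx : 0 ≤ x) : (x ^ ((1:ℝ)/3)) ^ (3:ℕ) = x := by
  rw [← Real.rpow_natCast (x ^ ((1:ℝ)/3)) 3, ← Real.rpow_mul hx]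
  norm_num

lemma cube_est (X s : ℝ) (hs0 : 0 < s) (hs : s ≤ 1/4) (hX0 : 0 < X)
    (hXs : X * s < 2) (heq : (2 - X*s)^3 = 27*X*(1-s)) :
    |27/8*X - 1 - 5/9*s| ≤ 3*s^2 := by
  -- upper bound on X
  have h2Xs : 0 < 2 - X*s := by linarith
  have hcube8 : (2 - X*s)^3 ≤ 8 := by nlinarith [sq_nonneg (X*s), mul_pos hX0 hs0]
  have hX2 : X ≤ 2/5 := by nlinarith
  have hXs' : X * s ≤ 1/10 := by nlinarith
  have hX1 : 1/4 ≤ X := by nlinarith [pow_le_pow_left₀ (by linarith : (0:ℝ) ≤ 19/10) (by linarith : (19:ℝ)/10 ≤ 2 - X*s) 3]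
  -- rearranged equation
  have h1 : X - 8/27 = 5/9*X*s + 2/9*X^2*s^2 - 1/27*X^3*s^3 := by linear_combination (-1/27) * heq
  have hd1 : 0 ≤ X - 8/27 := by nlinarith [mul_pos hX0 hs0, sq_nonneg (X*s)]
  have hd2 : X - 8/27 ≤ s := by nlinarith [mul_pos hX0 hs0, sq_nonneg (X*s)]
  have hD : 27/8*X - 1 - 5/9*s = 15/8*s*(X - 8/27) + 3/4*X^2*s^2 - 1/8*X^3*s^3 := by
    linear_combination (27/8) * h1
  rw [abs_le]
  constructor
  · have hc : X^3*s ≤ 1 := by nlinarith [sq_nonneg X, mul_pos hX0 hs0]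
    nlinarith [mul_nonneg hd1 hs0.le, mul_nonneg (sq_nonneg X) (sq_nonneg s), sq_nonneg s, mul_le_mul_of_nonneg_right hc (sq_nonneg s)]
  · nlinarith [mul_le_mul_of_nonneg_left hd2 hs0.le, mul_pos hX0 hs0, sq_nonneg (X*s),
      mul_nonneg (mul_nonneg (mul_nonneg hX0.le hX0.le) hX0.le) (mul_nonneg (mul_nonneg hs0.le hs0.le) hs0.le)]

lemma main_pos (v : ℝ) (hv : 2 ≤ v) :
    |27/8 * v^2 * ((v+1) ^ ((1:ℝ)/3) - (v-1) ^ ((1:ℝ)/3))^3 - 1 - 5/9 * (1/v^2)| ≤ 3 * (1/v^2)^2 := by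
  set a := (v+1) ^ ((1:ℝ)/3) with ha
  set b := (v-1) ^ ((1:ℝ)/3) with hb
  have hv1 : (0:ℝ) ≤ v - 1 := by linarith
  have ha3 : a ^ (3:ℕ) = v + 1 := cube_root_cube _ (by linarith)
  have hb3 : b ^ (3:ℕ) = v - 1 := cube_root_cube _ hv1
  have hb0 : 0 < b := by
    have : (0:ℝ) < v - 1 := by linarith
    positivity
  have hab : b < a := Real.rpow_lt_rpow hv1 (by linarith) (by norm_num)
  set f := a - b with hf
  have hf0 : 0 < f := by simp [hf]; linarith
  -- key identity: 2 - f^3 = 3*a*b*f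
  have hkey : 2 - f^3 = 3*a*b*f := by
    simp only [hf]
    linear_combination hb3 - ha3
  have hrel : (2 - f^3)^3 = 27*(v^2-1)*f^3 := by
    rw [hkey]
    have : (v^2 - 1) = (a^3) * (b^3) := by rw [ha3, hb3]; ring
    rw [this]; ring
  have hf32 : f^3 < 2 := by
    nlinarith [mul_pos (mul_pos (lt_trans hb0 hab) hb0) hf0]
  -- set up X, s
  have hv0 : (0:ℝ) < v := by linarith
  set s : ℝ := 1/v^2 with hs_def
  set X : ℝ := v^2 * f^3 with hX_def
  have hs0 : 0 < s := by positivity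
  have hs4 : s ≤ 1/4 := by
    rw [hs_def, div_le_div_iff₀ (by positivity) (by norm_num)]
    nlinarith
  have hX0 : 0 < X := by positivity
  have hXs : X * s < 2 := by
    have : X * s = f^3 := by rw [hX_def, hs_def]; field_simp
    rw [this]; exact hf32
  have heq : (2 - X*s)^3 = 27*X*(1-s) := by
    have h1 : X * s = f^3 := by rw [hX_def, hs_def]; field_simp
    have h2 : X * (1 - s) = (v^2 - 1) * f^3 := by
      rw [mul_sub, mul_one, h1, hX_def]; ring
    rw [h1]
    calc (2 - f^3)^3 = 27*(v^2-1)*f^3 := hrel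
      _ = 27*(X*(1-s)) := by rw [h2]; ring
      _ = 27*X*(1-s) := by ring
  have := cube_est X s hs0 hs4 hX0 hXs heq
  have hgoal : 27/8 * v^2 * f^3 = 27/8 * X := by rw [hX_def]; ring
  calc |27/8 * v^2 * f^3 - 1 - 5/9 * s| = |27/8*X - 1 - 5/9*s| := by rw [hgoal]
    _ ≤ 3*s^2 := this


/-- the concrete APS functions A and B satisfy the general asymptotic
hypotheses with α = 5/9. -/
theorem aps_concrete_functions_satisfy_hypotheses
    (G : ℝ) (hG : 0 < G)
    (A B : ℝ → ℝ)
    (hA : ∀ v : ℝ, A v = 3 * Real.pi * G / 8 * |v| * |(|v + 1| - |v - 1|)|)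
    (hB : ∀ v : ℝ, B v = 27 / 8 * |v| *
      |(|v + 1| ^ ((1 : ℝ) / 3) - |v - 1| ^ ((1 : ℝ) / 3))| ^ 3) :
    (∀ v : ℝ, 1 ≤ |v| → A v = 3 * Real.pi * G / 4 * |v|) ∧
    ∃ C > (0 : ℝ), ∃ M > (0 : ℝ), ∀ v : ℝ, M ≤ |v| →
      abs (|v| * B v - 1 - (5 / 9) / v ^ 2) ≤ C / v ^ 4 := by
  constructor
  · intro v hv
    rw [hA v]
    have h2 : |(|v + 1| - |v - 1|)| = 2 := by
      rcases le_abs.mp hv with h | h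
      · rw [abs_of_nonneg (by linarith : (0:ℝ) ≤ v + 1),
          abs_of_nonneg (by linarith : (0:ℝ) ≤ v - 1)]
        norm_num
      · rw [abs_of_nonpos (by linarith : v + 1 ≤ 0),
          abs_of_nonpos (by linarith : v - 1 ≤ 0)]
        rw [show -(v+1) - -(v-1) = (-2 : ℝ) by ring]
        norm_num
    rw [h2]; ring
  · refine ⟨3, by norm_num, 2, by norm_num, fun v hv => ?_⟩
    set y := |v| with hy
    have hy2 : 2 ≤ y := hv
    have hy0 : (0:ℝ) < y := by linarith
    -- rewrite |v+1|, |v-1| in terms of y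
    have habs : |(|v + 1| ^ ((1 : ℝ) / 3) - |v - 1| ^ ((1 : ℝ) / 3))|
        = (y+1) ^ ((1:ℝ)/3) - (y-1) ^ ((1:ℝ)/3) := by
      have hlt : (y-1) ^ ((1:ℝ)/3) < (y+1) ^ ((1:ℝ)/3) :=
        Real.rpow_lt_rpow (by linarith) (by linarith) (by norm_num)
      rcases abs_cases v with ⟨h1, h2⟩ | ⟨h1, h2⟩
      · -- v ≥ 0, so v = y ≥ 2
        have hveq : y = v := hy.trans h1
        rw [← hveq, abs_of_nonneg (by linarith : (0:ℝ) ≤ y + 1),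
          abs_of_nonneg (by linarith : (0:ℝ) ≤ y - 1)]
        exact abs_of_pos (by linarith)
      · -- v < 0, y = -v
        have hveq : v = -y := by rw [hy, abs_of_nonpos h2.le]; ring
        rw [hveq, show -y + 1 = -(y-1) by ring, show -y - 1 = -(y+1) by ring,
          abs_neg, abs_neg, abs_of_nonneg (by linarith : (0:ℝ) ≤ y - 1),
          abs_of_nonneg (by linarith : (0:ℝ) ≤ y + 1)]
        rw [abs_of_neg (by linarith)]
        ring
    have hBv : y * B v = 27/8 * y^2 * ((y+1) ^ ((1:ℝ)/3) - (y-1) ^ ((1:ℝ)/3))^3 := by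
      rw [hB v, habs]; ring
    have hmain := main_pos y hy2
    rw [hBv] at *
    have hv2 : v^2 = y^2 := (sq_abs v).symm
    have hv4 : v^4 = (y^2)^2 := by rw [show v^4 = (v^2)^2 by ring, hv2]
    calc |27/8 * y^2 * ((y+1) ^ ((1:ℝ)/3) - (y-1) ^ ((1:ℝ)/3))^3 - 1 - 5/9/v^2|
        = |27/8 * y^2 * ((y+1) ^ ((1:ℝ)/3) - (y-1) ^ ((1:ℝ)/3))^3 - 1 - 5/9 * (1/y^2)| := by
          rw [hv2]; ring_nf
      _ ≤ 3 * (1/y^2)^2 := hmain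
      _ = 3 / v^4 := by rw [hv4]; field_simp
end

section
/- Suppose Λ̃ = 0. Define the simplified operator H' on finitely supported ψ : ℤ → ℂ by (H'ψ)(n) = (3πG/4)·[ −((v_n−2)² − 2 − α)·ψ(n−1) − ((v_n+2)² − 2 − α)·ψ(n+1) + (2v_n² − 2α)·ψ(n) ]. Then there exists a continuous linear operator K : ℓ²(ℤ, ℂ) → ℓ²(ℤ, ℂ) which is a compact operator and satisfies Kψ = Hψ − H'ψ for every finitely supported ψ : ℤ → ℂ. -/
open Filter Topology
open scoped ENNReal

noncomputable section

namespace APS8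

abbrev L2 := lp (fun _ : ℤ => ℂ) 2

lemma summable_sq (f : L2) : Summable (fun n : ℤ => ‖f n‖ ^ (2:ℝ)) := by
  have := (lp.memℓp f).summable (p := 2) (by norm_num)
  simpa using this

lemma memℓp_ws {w : ℤ → ℝ} {C : ℝ} (hC : ∀ n, |w n| ≤ C) (k : ℤ) (f : L2) :
    Memℓp (fun n => (w n : ℂ) * f (n + k)) 2 := by
  apply memℓp_gen
  rw [show ((2:ℝ≥0∞)).toReal = (2:ℝ) by norm_num]
  have hfk : Summable (fun n : ℤ => ‖f (n + k)‖ ^ (2:ℝ)) := by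
    have := ((Equiv.addRight k).summable_iff
      (f := fun n : ℤ => ‖f n‖ ^ (2:ℝ))).2 (summable_sq f)
    simpa [Function.comp_def] using this
  refine Summable.of_nonneg_of_le (fun n => by positivity) (fun n => ?_)
    (hfk.mul_left (C ^ (2:ℝ)))
  have h1 : ‖(w n : ℂ) * f (n + k)‖ = |w n| * ‖f (n + k)‖ := by
    rw [norm_mul, Complex.norm_real, Real.norm_eq_abs]
  rw [h1]
  have h2 : (|w n| * ‖f (n + k)‖) ^ (2:ℝ) = |w n| ^ (2:ℝ) * ‖f (n + k)‖ ^ (2:ℝ) :=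
    Real.mul_rpow (abs_nonneg _) (norm_nonneg _)
  rw [h2]
  exact mul_le_mul_of_nonneg_right
    (Real.rpow_le_rpow (abs_nonneg _) (hC n) (by norm_num))
    (Real.rpow_nonneg (norm_nonneg _) _)

def TL (w : ℤ → ℝ) {C : ℝ} (hC : ∀ n, |w n| ≤ C) (k : ℤ) : L2 →ₗ[ℂ] L2 where
  toFun f := ⟨fun n => (w n : ℂ) * f (n + k), memℓp_ws hC k f⟩
  map_add' f g := by
    ext n
    simp only [lp.coeFn_add, Pi.add_apply]
    ring
  map_smul' c f := by
    ext n
    simp only [lp.coeFn_smul, Pi.smul_apply, smul_eq_mul, RingHom.id_apply]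
    ring


lemma TL_apply {w : ℤ → ℝ} {C : ℝ} (hC : ∀ n, |w n| ≤ C) (k : ℤ) (f : L2) (n : ℤ) :
    (TL w hC k f : ∀ _ : ℤ, ℂ) n = (w n : ℂ) * f (n + k) := rfl

lemma TL_norm {w : ℤ → ℝ} {C : ℝ} (hC : ∀ n, |w n| ≤ C) (k : ℤ) {D : ℝ} (hD0 : 0 ≤ D)
    (hD : ∀ n, |w n| ≤ D) (f : L2) : ‖TL w hC k f‖ ≤ D * ‖f‖ := by
  refine lp.norm_le_of_tsum_le (by norm_num) (mul_nonneg hD0 (norm_nonneg f)) ?_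
  rw [show ((2:ℝ≥0∞)).toReal = (2:ℝ) by norm_num]
  have hfk : Summable (fun n : ℤ => ‖f (n + k)‖ ^ (2:ℝ)) := by
    have := ((Equiv.addRight k).summable_iff
      (f := fun n : ℤ => ‖f n‖ ^ (2:ℝ))).2 (summable_sq f)
    simpa [Function.comp_def] using this
  have hsum : Summable (fun n : ℤ => ‖(TL w hC k f : ∀ _ : ℤ, ℂ) n‖ ^ (2:ℝ)) := by
    have := (memℓp_ws hC k f).summable (p := 2) (by norm_num)
    simp only [show ((2:ℝ≥0∞)).toReal = (2:ℝ) by norm_num] at this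
    exact this
  have hle : ∀ n : ℤ, ‖(TL w hC k f : ∀ _ : ℤ, ℂ) n‖ ^ (2:ℝ)
      ≤ D ^ (2:ℝ) * ‖f (n + k)‖ ^ (2:ℝ) := by
    intro n
    rw [TL_apply, norm_mul, Complex.norm_real, Real.norm_eq_abs,
      Real.mul_rpow (abs_nonneg _) (norm_nonneg _)]
    exact mul_le_mul_of_nonneg_right
      (Real.rpow_le_rpow (abs_nonneg _) (hD n) (by norm_num))
      (Real.rpow_nonneg (norm_nonneg _) _)
  calc ∑' n : ℤ, ‖(TL w hC k f : ∀ _ : ℤ, ℂ) n‖ ^ (2:ℝ)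
      ≤ ∑' n : ℤ, D ^ (2:ℝ) * ‖f (n + k)‖ ^ (2:ℝ) :=
        Summable.tsum_le_tsum hle hsum (hfk.mul_left _)
    _ = D ^ (2:ℝ) * ∑' n : ℤ, ‖f (n + k)‖ ^ (2:ℝ) := tsum_mul_left
    _ = D ^ (2:ℝ) * ∑' n : ℤ, ‖f n‖ ^ (2:ℝ) := by
        congr 1
        have := (Equiv.addRight k).tsum_eq (f := fun n : ℤ => ‖f n‖ ^ (2:ℝ))
        simpa [Function.comp] using this
    _ = D ^ (2:ℝ) * ‖f‖ ^ (2:ℝ) := by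
        have h := lp.norm_rpow_eq_tsum (p := 2)
          (by norm_num : 0 < ((2:ℝ≥0∞)).toReal) f
        simp only [show ((2:ℝ≥0∞)).toReal = (2:ℝ) by norm_num] at h
        rw [h]
    _ = (D * ‖f‖) ^ (2:ℝ) := (Real.mul_rpow hD0 (norm_nonneg f)).symm

def T (w : ℤ → ℝ) {C : ℝ} (hC : ∀ n, |w n| ≤ C) (k : ℤ) : L2 →L[ℂ] L2 :=
  LinearMap.mkContinuous (TL w hC k) (max C 0)
    (fun f => TL_norm hC k (le_max_right _ _)
      (fun n => (hC n).trans (le_max_left _ _)) f)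

lemma T_apply {w : ℤ → ℝ} {C : ℝ} (hC : ∀ n, |w n| ≤ C) (k : ℤ) (f : L2) (n : ℤ) :
    (T w hC k f : ∀ _ : ℤ, ℂ) n = (w n : ℂ) * f (n + k) := rfl

lemma T_opNorm_le {w : ℤ → ℝ} {C : ℝ} (hC : ∀ n, |w n| ≤ C) (k : ℤ) {D : ℝ}
    (hD0 : 0 ≤ D) (hD : ∀ n, |w n| ≤ D) : ‖T w hC k‖ ≤ D :=
  ContinuousLinearMap.opNorm_le_bound _ hD0 (fun f => TL_norm hC k hD0 hD f)

def evalCLM (m : ℤ) : L2 →L[ℂ] ℂ :=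
  LinearMap.mkContinuous
    { toFun := fun f : L2 => f m
      map_add' := fun f g => by simp [lp.coeFn_add]
      map_smul' := fun c f => by simp [lp.coeFn_smul] }
    1 (fun f => by
        simp only [one_mul]; exact lp.norm_apply_le_norm (by norm_num : (2:ℝ≥0∞) ≠ 0) f m)

lemma isCompactOperator_clm_to_scalar (ℓ : L2 →L[ℂ] ℂ) : IsCompactOperator ⇑ℓ := by
  refine ⟨Metric.closedBall 0 ‖ℓ‖, isCompact_closedBall _ _, ?_⟩
  refine Filter.mem_of_superset (Metric.closedBall_mem_nhds (0 : L2) one_pos) ?_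
  intro x hx
  simp only [Set.mem_preimage, Metric.mem_closedBall, dist_zero_right] at hx ⊢
  calc ‖ℓ x‖ ≤ ‖ℓ‖ * ‖x‖ := ℓ.le_opNorm x
    _ ≤ ‖ℓ‖ * 1 := mul_le_mul_of_nonneg_left hx (norm_nonneg _)
    _ = ‖ℓ‖ := mul_one _

lemma isCompactOperator_rankOne (ℓ : L2 →L[ℂ] ℂ) (v : L2) :
    IsCompactOperator (fun f : L2 => ℓ f • v) := by
  have h := (isCompactOperator_clm_to_scalar ℓ).clm_comp
    (ContinuousLinearMap.toSpanSingleton ℂ v)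
  have e : (fun f : L2 => ℓ f • v) = ⇑(ContinuousLinearMap.toSpanSingleton ℂ v) ∘ ⇑ℓ := by
    funext f; simp [ContinuousLinearMap.toSpanSingleton_apply]
  rw [e]; exact h

lemma isCompactOperator_sum {ι : Type*} (s : Finset ι) {F : ι → L2 → L2}
    (h : ∀ i ∈ s, IsCompactOperator (F i)) :
    IsCompactOperator (fun f => ∑ i ∈ s, F i f) := by
  classical
  induction s using Finset.cons_induction with
  | empty => simp only [Finset.sum_empty]; exact isCompactOperator_zero
  | cons i s his ih =>
      simp only [Finset.sum_cons]
      exact (h i (Finset.mem_cons_self i s)).add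
        (ih fun j hj => h j (Finset.mem_cons_of_mem hj))


def sing (n : ℤ) : L2 := lp.single 2 n (1:ℂ)

lemma sing_self (n : ℤ) : (sing n : ∀ _ : ℤ, ℂ) n = 1 :=
  lp.single_apply_self (E := fun _ : ℤ => ℂ) 2 n (1:ℂ)

lemma sing_ne (n : ℤ) {j : ℤ} (h : j ≠ n) : (sing n : ∀ _ : ℤ, ℂ) j = 0 :=
  lp.single_apply_ne (E := fun _ : ℤ => ℂ) 2 n (1:ℂ) h

lemma evalCLM_apply (m : ℤ) (f : L2) : evalCLM m f = f m := rfl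

lemma isCompactOperator_T_of_finite {w : ℤ → ℝ} {C : ℝ} (hC : ∀ n, |w n| ≤ C) (k : ℤ)
    (hfin : (Function.support w).Finite) : IsCompactOperator ⇑(T w hC k) := by
  classical
  have hrep : ⇑(T w hC k) = fun f : L2 => ∑ n ∈ hfin.toFinset,
      (((w n : ℂ) • evalCLM (n + k)) f) • sing n := by
    funext f
    apply lp.ext
    funext j
    rw [T_apply]
    rw [lp.coeFn_sum, Finset.sum_apply]
    simp only [lp.coeFn_smul, Pi.smul_apply, smul_eq_mul,
      ContinuousLinearMap.smul_apply, evalCLM_apply]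
    by_cases hj : j ∈ hfin.toFinset
    · rw [Finset.sum_eq_single j]
      · rw [sing_self, mul_one]
      · intro n _ hnj
        rw [sing_ne n (Ne.symm hnj), mul_zero]
      · intro hcon
        exact absurd hj hcon
    · have hw0 : w j = 0 := by
        by_contra hne
        exact hj (hfin.mem_toFinset.2 hne)
      rw [hw0]
      rw [Finset.sum_eq_zero]
      · simp
      · intro n hn
        have hnj : j ≠ n := by
          rintro rfl
          exact hj hn
        rw [sing_ne n hnj, mul_zero]
  rw [hrep]
  exact isCompactOperator_sum _ (fun n _ => isCompactOperator_rankOne _ _)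

lemma isCompactOperator_T {w : ℤ → ℝ} {C : ℝ} (hC : ∀ n, |w n| ≤ C) (k : ℤ)
    (hw : Tendsto w cofinite (𝓝 0)) : IsCompactOperator ⇑(T w hC k) := by
  classical
  set wt : ℕ → ℤ → ℝ := fun j n => if (1:ℝ)/(j+1) < |w n| then w n else 0 with hwt
  have hCt : ∀ j n, |wt j n| ≤ C := by
    intro j n
    by_cases h : (1:ℝ)/(j+1) < |w n|
    · simp only [wt, if_pos h]; exact hC n
    · simp only [wt, if_neg h, abs_zero]
      exact le_trans (abs_nonneg (w n)) (hC n)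
  have hfin : ∀ j : ℕ, (Function.support (wt j)).Finite := by
    intro j
    have hpos : (0:ℝ) < 1/((j:ℝ)+1) := by positivity
    have h1 : ∀ᶠ n in (cofinite : Filter ℤ), ¬ ((1:ℝ)/(j+1) < |w n|) := by
      have h2 := Metric.tendsto_nhds.mp hw ((1:ℝ)/(j+1)) hpos
      filter_upwards [h2] with n hn
      rw [Real.dist_eq, sub_zero] at hn
      exact not_lt.mpr hn.le
    rw [Filter.eventually_cofinite] at h1
    refine h1.subset ?_
    intro n hn
    simp only [Set.mem_setOf_eq, not_not]
    by_contra hcon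
    exact hn (if_neg hcon)
  have hsub : ∀ j : ℕ, ∀ n, |wt j n - w n| ≤ (1:ℝ)/(j+1) := by
    intro j n
    by_cases h : (1:ℝ)/(j+1) < |w n|
    · simp only [wt, if_pos h, sub_self, abs_zero]
      positivity
    · simp only [wt, if_neg h, zero_sub, abs_neg]
      exact not_lt.mp h
  refine isCompactOperator_of_tendsto (l := (atTop : Filter ℕ))
    (F := fun j => T (wt j) (hCt j) k) ?_ ?_
  · rw [tendsto_iff_norm_sub_tendsto_zero]
    apply squeeze_zero (fun j => norm_nonneg _) (fun j => ?_)
      tendsto_one_div_add_atTop_nhds_zero_nat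
    have hdiff : T (wt j) (hCt j) k - T w hC k
        = T (fun n => wt j n - w n) (hsub j) k := by
      apply ContinuousLinearMap.ext
      intro f
      apply lp.ext
      funext n
      rw [ContinuousLinearMap.sub_apply, lp.coeFn_sub, Pi.sub_apply, T_apply,
        T_apply, T_apply]
      push_cast
      ring
    rw [hdiff]
    exact T_opNorm_le (hsub j) k (by positivity) (hsub j)
  · exact Filter.Eventually.of_forall fun j => isCompactOperator_T_of_finite _ _ (hfin j)

lemma exists_bound_of_tendsto {w : ℤ → ℝ} (hw : Tendsto w cofinite (𝓝 0)) :
    ∃ C : ℝ, ∀ n, |w n| ≤ C := by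
  classical
  have h1 : ∀ᶠ n in (cofinite : Filter ℤ), |w n| < 1 := by
    have h2 := Metric.tendsto_nhds.mp hw 1 one_pos
    filter_upwards [h2] with n hn
    rwa [Real.dist_eq, sub_zero] at hn
  rw [Filter.eventually_cofinite] at h1
  refine ⟨1 + ∑ n ∈ h1.toFinset, |w n|, fun n => ?_⟩
  by_cases h : |w n| < 1
  · have : (0:ℝ) ≤ ∑ n ∈ h1.toFinset, |w n| :=
      Finset.sum_nonneg fun i _ => abs_nonneg _
    linarith
  · have hn : n ∈ h1.toFinset := h1.mem_toFinset.2 (by simpa using h)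
    have := Finset.single_le_sum (f := fun i => |w i|)
      (fun i _ => abs_nonneg _) hn
    linarith


lemma tendsto_abs_affine (b : ℝ) :
    Tendsto (fun n : ℤ => |4 * (n:ℝ) + b|) cofinite atTop := by
  rw [Int.cofinite_eq]
  rw [tendsto_sup]
  constructor
  · apply tendsto_abs_atBot_atTop.comp
    apply tendsto_atBot_add_const_right
    apply Tendsto.const_mul_atBot (by norm_num : (0:ℝ) < 4)
    exact tendsto_intCast_atBot_iff.mpr tendsto_id
  · apply tendsto_abs_atTop_atTop.comp
    apply tendsto_atTop_add_const_right
    apply Tendsto.const_mul_atTop (by norm_num : (0:ℝ) < 4)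
    exact tendsto_intCast_atTop_iff.mpr tendsto_id

lemma tendsto_inv_affine (b : ℝ) :
    Tendsto (fun n : ℤ => (4 * (n:ℝ) + b)⁻¹) cofinite (𝓝 0) := by
  have h := (tendsto_abs_affine b).inv_tendsto_atTop
  apply squeeze_zero_norm (fun n => ?_) h
  rw [Pi.inv_apply, Real.norm_eq_abs, abs_inv]

lemma aff_ne_zero {ε : ℝ} (hε : ε ∈ Set.Ioo (0:ℝ) 4) (n : ℤ) : 4 * (n:ℝ) + ε ≠ 0 := by
  rcases le_or_gt 0 n with h | h
  · have h1 : (0:ℝ) ≤ (n:ℝ) := by exact_mod_cast h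
    have := hε.1
    positivity
  · have h1 : n ≤ -1 := by omega
    have h2 : (n:ℝ) ≤ -1 := by exact_mod_cast h1
    have := hε.2
    intro h0
    linarith

lemma tendsto_e (G ε α : ℝ) (hG : 0 < G) (hε : ε ∈ Set.Ioo (0:ℝ) 4)
    (A B : ℝ → ℝ)
    (hA : ∃ R > (0 : ℝ), ∀ v : ℝ, R ≤ |v| → A v = 3 * Real.pi * G / 4 * |v|)
    (hB : ∃ C₀ > (0 : ℝ), ∃ M₀ > (0 : ℝ), ∀ v : ℝ, M₀ ≤ |v| →
      abs (|v| * B v - 1 - α / v ^ 2) ≤ C₀ / v ^ 4)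
    (hBpos : ∀ n : ℤ, 0 < B (4 * (n : ℝ) + ε))
    (d : ℤ → ℝ)
    (hd : ∀ n : ℤ, d n = (A (4 * (n : ℝ) + ε + 2) + A (4 * (n : ℝ) + ε - 2))
      / B (4 * (n : ℝ) + ε)) :
    Tendsto (fun n : ℤ => d n - 3 * Real.pi * G / 4 * (2 * (4 * (n:ℝ) + ε)^2 - 2*α))
      cofinite (𝓝 0) := by
  obtain ⟨R, hR, hAR⟩ := hA
  obtain ⟨C₀, hC₀, M₀, hM₀, hBr⟩ := hB
  have hπ := Real.pi_pos
  set g := 3 * Real.pi * G / 4 with hgdef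
  have hg : 0 < g := by positivity
  set v : ℤ → ℝ := fun n => 4 * (n:ℝ) + ε with hv
  have hvne : ∀ n, v n ≠ 0 := fun n => aff_ne_zero hε n
  set w : ℤ → ℝ := fun n => |v n| * B (v n) with hwdef
  have hwpos : ∀ n, 0 < w n := fun n => mul_pos (abs_pos.2 (hvne n)) (hBpos n)
  set r : ℤ → ℝ := fun n => w n - 1 - α / (v n)^2 with hrdef
  have habs : Tendsto (fun n => |v n|) cofinite atTop := tendsto_abs_affine ε
  have hz : Tendsto (fun n => (v n)⁻¹) cofinite (𝓝 0) := tendsto_inv_affine ε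
  have hrlim : Tendsto r cofinite (𝓝 0) := by
    have hgt : Tendsto (fun n => C₀ * ((v n)⁻¹)^4) cofinite (𝓝 0) := by
      simpa using (hz.pow 4).const_mul C₀
    refine squeeze_zero_norm' ?_ hgt
    filter_upwards [habs.eventually_ge_atTop M₀] with n hn
    have h1 := hBr (v n) hn
    have h2 : C₀ / (v n)^4 = C₀ * ((v n)⁻¹)^4 := by
      field_simp
    rw [Real.norm_eq_abs, ← h2]
    exact h1
  have hwlim : Tendsto w cofinite (𝓝 1) := by
    have h1 : Tendsto (fun n => 1 + α * ((v n)⁻¹)^2 + r n) cofinite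
        (𝓝 (1 + α * 0^2 + 0)) := by
      exact (((hz.pow 2).const_mul α).const_add 1).add hrlim
    have h2 : (fun n => 1 + α * ((v n)⁻¹)^2 + r n) = w := by
      funext n
      rw [hrdef]
      have := hvne n
      field_simp
      ring
    rw [h2] at h1
    simpa using h1
  have hv2r : Tendsto (fun n => (v n)^2 * r n) cofinite (𝓝 0) := by
    have hgt : Tendsto (fun n => C₀ * ((v n)⁻¹)^2) cofinite (𝓝 0) := by
      simpa using (hz.pow 2).const_mul C₀
    refine squeeze_zero_norm' ?_ hgt
    filter_upwards [habs.eventually_ge_atTop (max M₀ 1)] with n hn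
    have h1 := hBr (v n) (le_trans (le_max_left _ _) hn)
    have h2 : (0:ℝ) ≤ (v n)^2 := sq_nonneg _
    rw [Real.norm_eq_abs, abs_mul, abs_of_nonneg h2]
    calc (v n)^2 * |r n| ≤ (v n)^2 * (C₀ / (v n)^4) := by
          apply mul_le_mul_of_nonneg_left _ h2
          exact h1
      _ = C₀ * ((v n)⁻¹)^2 := by
          have := hvne n
          field_simp
  have heq : ∀ᶠ n in (cofinite : Filter ℤ),
      d n - g * (2 * (v n)^2 - 2*α)
      = 2 * g * ((α * (w n - 1) - (v n)^2 * r n) / (w n)) := by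
    filter_upwards [habs.eventually_ge_atTop (max (R+2) 2)] with n hn
    have h2 : (2:ℝ) ≤ |v n| := le_trans (le_max_right _ _) hn
    have hR2 : R + 2 ≤ |v n| := le_trans (le_max_left _ _) hn
    have hA1 : A (v n + 2) = g * |v n + 2| := by
      apply hAR
      have : |v n| ≤ |v n + 2| + 2 := by
        calc |v n| = |(v n + 2) + (-2)| := by ring_nf
          _ ≤ |v n + 2| + |(-2:ℝ)| := abs_add_le _ _
          _ = |v n + 2| + 2 := by norm_num
      linarith
    have hA2 : A (v n - 2) = g * |v n - 2| := by
      apply hAR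
      have : |v n| ≤ |v n - 2| + 2 := by
        calc |v n| = |(v n - 2) + 2| := by ring_nf
          _ ≤ |v n - 2| + |(2:ℝ)| := abs_add_le _ _
          _ = |v n - 2| + 2 := by norm_num
      linarith
    have habs2 : |v n + 2| + |v n - 2| = 2 * |v n| := by
      rcases le_or_gt 0 (v n) with h | h
      · have hv2 : (2:ℝ) ≤ v n := by rwa [abs_of_nonneg h] at h2
        rw [abs_of_nonneg h, abs_of_nonneg (by linarith), abs_of_nonneg (by linarith)]
        ring
      · have hv2 : v n ≤ -2 := by
          rw [abs_of_neg h] at h2; linarith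
        rw [abs_of_neg h, abs_of_nonpos (by linarith), abs_of_nonpos (by linarith)]
        ring
    have hBv : B (v n) = w n / |v n| := by
      rw [hwdef]
      field_simp
    have hd' : d n = 2 * g * ((v n)^2 / w n) := by
      rw [hd n, hA1, hA2]
      have : g * |v n + 2| + g * |v n - 2| = g * (2 * |v n|) := by
        rw [← mul_add, habs2]
      have h3 : |v n| * |v n| = (v n)^2 := by rw [abs_mul_abs_self, sq]
      rw [this, hBv, div_div_eq_mul_div]
      rw [show g * (2 * |v n|) * |v n| = 2 * g * ((v n)^2) from by rw [← h3]; ring]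
      rw [mul_div_assoc]
    have hwne : w n ≠ 0 := ne_of_gt (hwpos n)
    have hvne' : v n ≠ 0 := hvne n
    rw [hd']
    simp only [hrdef]
    field_simp
    ring
  rw [Filter.tendsto_congr' heq]
  have hnum : Tendsto (fun n => α * (w n - 1) - (v n)^2 * r n) cofinite (𝓝 0) := by
    have := ((hwlim.sub_const 1).const_mul α).sub hv2r
    simpa using this
  have := (hnum.div hwlim one_ne_zero).const_mul (2*g)
  simpa using this


set_option maxHeartbeats 1600000 in
lemma tendsto_a (G ε α : ℝ) (hG : 0 < G) (hε : ε ∈ Set.Ioo (0:ℝ) 4)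
    (A B : ℝ → ℝ)
    (hA : ∃ R > (0 : ℝ), ∀ v : ℝ, R ≤ |v| → A v = 3 * Real.pi * G / 4 * |v|)
    (hB : ∃ C₀ > (0 : ℝ), ∃ M₀ > (0 : ℝ), ∀ v : ℝ, M₀ ≤ |v| →
      abs (|v| * B v - 1 - α / v ^ 2) ≤ C₀ / v ^ 4)
    (hBpos : ∀ n : ℤ, 0 < B (4 * (n : ℝ) + ε))
    (c : ℤ → ℝ)
    (hc : ∀ n : ℤ, c n = A (4 * (n : ℝ) + ε + 2) /
      Real.sqrt (B (4 * (n : ℝ) + ε) * B (4 * ((n : ℝ) + 1) + ε))) :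
    Tendsto (fun n : ℤ => c n - 3 * Real.pi * G / 4 * ((4 * (n:ℝ) + ε + 2)^2 - 2 - α))
      cofinite (𝓝 0) := by
  obtain ⟨R, hR, hAR⟩ := hA
  obtain ⟨C₀, hC₀, M₀, hM₀, hBr⟩ := hB
  have hπ := Real.pi_pos
  set g := 3 * Real.pi * G / 4 with hgdef
  have hg : 0 < g := by positivity
  set m : ℤ → ℝ := fun n => 4 * (n:ℝ) + ε + 2 with hmdef
  set v0 : ℤ → ℝ := fun n => 4 * (n:ℝ) + ε with hv0def
  set v1 : ℤ → ℝ := fun n => 4 * ((n:ℝ) + 1) + ε with hv1def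
  have hv0m : ∀ n, v0 n = m n - 2 := fun n => by simp only [hv0def, hmdef]; ring
  have hv1m : ∀ n, v1 n = m n + 2 := fun n => by simp only [hv1def, hmdef]; ring
  have hv0ne : ∀ n, v0 n ≠ 0 := fun n => aff_ne_zero hε n
  have hv1ne : ∀ n, v1 n ≠ 0 := by
    intro n
    have h := aff_ne_zero hε (n+1)
    have h2 : ((n+1 : ℤ) : ℝ) = (n:ℝ) + 1 := by push_cast; ring
    rw [h2] at h
    exact h
  have hB1pos : ∀ n, 0 < B (v1 n) := by
    intro n
    have h := hBpos (n+1)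
    have h2 : ((n+1 : ℤ) : ℝ) = (n:ℝ) + 1 := by push_cast; ring
    rw [h2] at h
    exact h
  set w0 : ℤ → ℝ := fun n => |v0 n| * B (v0 n) with hw0def
  set w1 : ℤ → ℝ := fun n => |v1 n| * B (v1 n) with hw1def
  have hw0pos : ∀ n, 0 < w0 n := fun n => mul_pos (abs_pos.2 (hv0ne n)) (hBpos n)
  have hw1pos : ∀ n, 0 < w1 n := fun n => mul_pos (abs_pos.2 (hv1ne n)) (hB1pos n)
  set r0 : ℤ → ℝ := fun n => w0 n - 1 - α / (v0 n)^2 with hr0def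
  set r1 : ℤ → ℝ := fun n => w1 n - 1 - α / (v1 n)^2 with hr1def
  set s0 : ℤ → ℝ := fun n => 1 + α / (v0 n)^2 with hs0def
  set s1 : ℤ → ℝ := fun n => 1 + α / (v1 n)^2 with hs1def
  set P : ℤ → ℝ := fun n => w0 n * w1 n with hPdef
  have hPpos : ∀ n, 0 < P n := fun n => mul_pos (hw0pos n) (hw1pos n)
  set X : ℤ → ℝ := fun n => (m n)^2 - 2 - α with hXdef
  set N : ℤ → ℝ := fun n => (m n)^2 * ((m n)^2 - 4) - (X n)^2 * P n with hNdef
  set Nrat : ℤ → ℝ := fun n => (m n)^2 * ((m n)^2 - 4) - (X n)^2 * (s0 n * s1 n)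
    with hNratdef
  set y : ℤ → ℝ := fun n => (m n)⁻¹ with hydef
  -- basic limits
  have habs : Tendsto (fun n => |m n|) cofinite atTop := by
    have h := tendsto_abs_affine (ε + 2)
    have h2 : (fun n : ℤ => |4 * (n:ℝ) + (ε + 2)|) = fun n => |m n| := by
      funext n; simp only [hmdef]; ring_nf
    rwa [h2] at h
  have hy : Tendsto y cofinite (𝓝 0) := by
    have h := habs.inv_tendsto_atTop
    apply squeeze_zero_norm (fun n => ?_) h
    rw [Pi.inv_apply, hydef, Real.norm_eq_abs, abs_inv]
  have hy2 : Tendsto (fun n => (y n)^2) cofinite (𝓝 0) := by simpa using hy.pow 2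
  have hy4 : Tendsto (fun n => (y n)^4) cofinite (𝓝 0) := by simpa using hy.pow 4
  have hiv0 : Tendsto (fun n => (v0 n)⁻¹) cofinite (𝓝 0) := tendsto_inv_affine ε
  have hiv1 : Tendsto (fun n => (v1 n)⁻¹) cofinite (𝓝 0) := by
    have h := tendsto_inv_affine (ε + 4)
    have h2 : (fun n : ℤ => (4 * (n:ℝ) + (ε + 4))⁻¹) = fun n => (v1 n)⁻¹ := by
      funext n; simp only [hv1def]; ring_nf
    rwa [h2] at h
  have hXtop : Tendsto X cofinite atTop := by
    have h1 : Tendsto (fun n => |m n| * |m n|) cofinite atTop :=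
      habs.atTop_mul_atTop₀ habs
    have h2 : (fun n : ℤ => |m n| * |m n|) = fun n => (m n)^2 := by
      funext n; rw [abs_mul_abs_self, sq]
    rw [h2] at h1
    have h3 := tendsto_atTop_add_const_right cofinite (-2 - α) h1
    have h4 : (fun n : ℤ => (m n)^2 + (-2 - α)) = X := by
      funext n; simp only [hXdef]; ring
    rwa [h4] at h3
  -- r bounds
  have hr0b : ∀ᶠ n in (cofinite : Filter ℤ), |r0 n| ≤ C₀ / (v0 n)^4 := by
    filter_upwards [habs.eventually_ge_atTop (M₀ + 2)] with n hn
    have h1 : M₀ ≤ |v0 n| := by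
      have h2 : |m n| - |(2:ℝ)| ≤ |m n - 2| := abs_sub_abs_le_abs_sub _ _
      rw [hv0m]
      have : |(2:ℝ)| = 2 := by norm_num
      linarith [this ▸ h2]
    exact hBr (v0 n) h1
  have hr1b : ∀ᶠ n in (cofinite : Filter ℤ), |r1 n| ≤ C₀ / (v1 n)^4 := by
    filter_upwards [habs.eventually_ge_atTop (M₀ + 2)] with n hn
    have h1 : M₀ ≤ |v1 n| := by
      have h2 : |m n| - |(-2:ℝ)| ≤ |m n - (-2)| := abs_sub_abs_le_abs_sub _ _
      rw [hv1m]
      have h3 : |(-2:ℝ)| = 2 := by norm_num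
      have h4 : m n - (-2) = m n + 2 := by ring
      rw [h4, h3] at h2
      linarith
    exact hBr (v1 n) h1
  have hr0lim : Tendsto r0 cofinite (𝓝 0) := by
    have hgt : Tendsto (fun n => C₀ * ((v0 n)⁻¹)^4) cofinite (𝓝 0) := by
      simpa using (hiv0.pow 4).const_mul C₀
    refine squeeze_zero_norm' ?_ hgt
    filter_upwards [hr0b] with n hn
    rw [Real.norm_eq_abs]
    calc |r0 n| ≤ C₀ / (v0 n)^4 := hn
      _ = C₀ * ((v0 n)⁻¹)^4 := by rw [div_eq_mul_inv, inv_pow]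
  have hr1lim : Tendsto r1 cofinite (𝓝 0) := by
    have hgt : Tendsto (fun n => C₀ * ((v1 n)⁻¹)^4) cofinite (𝓝 0) := by
      simpa using (hiv1.pow 4).const_mul C₀
    refine squeeze_zero_norm' ?_ hgt
    filter_upwards [hr1b] with n hn
    rw [Real.norm_eq_abs]
    calc |r1 n| ≤ C₀ / (v1 n)^4 := hn
      _ = C₀ * ((v1 n)⁻¹)^4 := by rw [div_eq_mul_inv, inv_pow]
  have hs0lim : Tendsto s0 cofinite (𝓝 1) := by
    have h1 : Tendsto (fun n => 1 + α * ((v0 n)⁻¹)^2) cofinite (𝓝 (1 + α * 0^2)) :=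
      ((hiv0.pow 2).const_mul α).const_add 1
    have h2 : (fun n => 1 + α * ((v0 n)⁻¹)^2) = s0 := by
      funext n; simp only [hs0def]; rw [div_eq_mul_inv, inv_pow]
    rw [h2] at h1
    simpa using h1
  have hs1lim : Tendsto s1 cofinite (𝓝 1) := by
    have h1 : Tendsto (fun n => 1 + α * ((v1 n)⁻¹)^2) cofinite (𝓝 (1 + α * 0^2)) :=
      ((hiv1.pow 2).const_mul α).const_add 1
    have h2 : (fun n => 1 + α * ((v1 n)⁻¹)^2) = s1 := by
      funext n; simp only [hs1def]; rw [div_eq_mul_inv, inv_pow]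
    rw [h2] at h1
    simpa using h1
  have hw0lim : Tendsto w0 cofinite (𝓝 1) := by
    have h1 := hs0lim.add hr0lim
    have h2 : (fun n => s0 n + r0 n) = w0 := by
      funext n; simp only [hs0def, hr0def]; ring
    rw [h2] at h1
    simpa using h1
  have hw1lim : Tendsto w1 cofinite (𝓝 1) := by
    have h1 := hs1lim.add hr1lim
    have h2 : (fun n => s1 n + r1 n) = w1 := by
      funext n; simp only [hs1def, hr1def]; ring
    rw [h2] at h1
    simpa using h1
  have hPlim : Tendsto P cofinite (𝓝 1) := by
    have h1 := hw0lim.mul hw1lim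
    simpa using h1
  have hev3 : ∀ᶠ n in (cofinite : Filter ℤ), (3:ℝ) ≤ |m n| :=
    habs.eventually_ge_atTop 3
  -- ratio limits via y
  have hden1 : Tendsto (fun n => (1 - 2*y n)^2) cofinite (𝓝 1) := by
    have h1 : Tendsto (fun n => 1 - 2*y n) cofinite (𝓝 1) := by
      have := (tendsto_const_nhds (x := (1:ℝ))).sub (hy.const_mul 2)
      simpa using this
    simpa using h1.pow 2
  have hden2 : Tendsto (fun n => (1 + 2*y n)^2) cofinite (𝓝 1) := by
    have h1 : Tendsto (fun n => 1 + 2*y n) cofinite (𝓝 1) := by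
      have := (tendsto_const_nhds (x := (1:ℝ))).add (hy.const_mul 2)
      simpa using this
    simpa using h1.pow 2
  have hF0 : Tendsto (fun n => (X n)^2 / (v0 n)^4) cofinite (𝓝 1) := by
    have h1 : Tendsto (fun n => ((1 - (2+α)*(y n)^2) / (1 - 2*y n)^2)^2)
        cofinite (𝓝 1) := by
      have hnum : Tendsto (fun n => 1 - (2+α)*(y n)^2) cofinite (𝓝 1) := by
        have := (tendsto_const_nhds (x := (1:ℝ))).sub (hy2.const_mul (2+α))
        simpa using this
      have := (hnum.div hden1 one_ne_zero).pow 2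
      simpa using this
    refine Tendsto.congr' ?_ h1
    filter_upwards [hev3] with n h3
    have hm0 : m n ≠ 0 := by
      intro h; rw [h] at h3; norm_num at h3
    have hm2 : m n - 2 ≠ 0 := by
      intro h
      have : m n = 2 := by linarith
      rw [this] at h3; norm_num at h3
    simp only [hXdef, hydef]
    rw [hv0m]
    field_simp
    ring
  have hF1 : Tendsto (fun n => (X n)^2 / (v1 n)^4) cofinite (𝓝 1) := by
    have h1 : Tendsto (fun n => ((1 - (2+α)*(y n)^2) / (1 + 2*y n)^2)^2)
        cofinite (𝓝 1) := by
      have hnum : Tendsto (fun n => 1 - (2+α)*(y n)^2) cofinite (𝓝 1) := by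
        have := (tendsto_const_nhds (x := (1:ℝ))).sub (hy2.const_mul (2+α))
        simpa using this
      have := (hnum.div hden2 one_ne_zero).pow 2
      simpa using this
    refine Tendsto.congr' ?_ h1
    filter_upwards [hev3] with n h3
    have hm0 : m n ≠ 0 := by
      intro h; rw [h] at h3; norm_num at h3
    have hp2 : m n + 2 ≠ 0 := by
      intro h
      have : m n = -2 := by linarith
      rw [this] at h3; norm_num at h3
    simp only [hXdef, hydef]
    rw [hv1m]
    field_simp
    ring
  have hNratlim : Tendsto Nrat cofinite (𝓝 (2*α^2 - 20*α - 4)) := by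
    have h1 : Tendsto (fun n => (2*α^2 - 20*α - 4 + (20*α^2 + 88*α + 32)*(y n)^2
        + (-(α^4 + 12*α^3 + 52*α^2 + 96*α + 64))*(y n)^4)
        / ((1 - 2*y n)^2 * (1 + 2*y n)^2)) cofinite (𝓝 (2*α^2 - 20*α - 4)) := by
      have hnum : Tendsto (fun n => 2*α^2 - 20*α - 4 + (20*α^2 + 88*α + 32)*(y n)^2
          + (-(α^4 + 12*α^3 + 52*α^2 + 96*α + 64))*(y n)^4) cofinite
          (𝓝 (2*α^2 - 20*α - 4)) := by
        have := ((tendsto_const_nhds (x := (2*α^2 - 20*α - 4:ℝ))).add (hy2.const_mul (20*α^2 + 88*α + 32))).add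
          (hy4.const_mul (-(α^4 + 12*α^3 + 52*α^2 + 96*α + 64)))
        simpa using this
      have hden : Tendsto (fun n => (1 - 2*y n)^2 * (1 + 2*y n)^2) cofinite (𝓝 1) := by
        simpa using hden1.mul hden2
      have := hnum.div hden one_ne_zero
      rw [div_one] at this; exact this
    refine Tendsto.congr' ?_ h1
    filter_upwards [hev3] with n h3
    have hm0 : m n ≠ 0 := by
      intro h; rw [h] at h3; norm_num at h3
    have hm2 : m n - 2 ≠ 0 := by
      intro h
      have : m n = 2 := by linarith
      rw [this] at h3; norm_num at h3
    have hp2 : m n + 2 ≠ 0 := by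
      intro h
      have : m n = -2 := by linarith
      rw [this] at h3; norm_num at h3
    simp only [hNratdef, hs0def, hs1def, hXdef, hydef]
    rw [hv0m, hv1m]
    field_simp
    ring
  -- bound on N
  set c4 : ℝ := 2*α^2 - 20*α - 4 with hc4def
  set CN : ℝ := |c4| + 1 + 4*C₀ + 4*C₀ with hCNdef
  have hNdec : ∀ n, N n = Nrat n - (X n)^2 * (r0 n * w1 n) - (X n)^2 * (s0 n * r1 n) := by
    intro n
    simp only [hNdef, hNratdef, hPdef, hr0def, hr1def, hs0def, hs1def]
    ring
  have hNb : ∀ᶠ n in (cofinite : Filter ℤ), |N n| ≤ CN := by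
    have e1 : ∀ᶠ n in (cofinite : Filter ℤ), |Nrat n| ≤ |c4| + 1 :=
      (hNratlim.abs).eventually_le_const (by linarith [abs_nonneg c4] : |c4| < |c4| + 1)
    have e2 : ∀ᶠ n in (cofinite : Filter ℤ), |w1 n| ≤ 2 :=
      (hw1lim.abs).eventually_le_const (by norm_num : |(1:ℝ)| < 2)
    have e3 : ∀ᶠ n in (cofinite : Filter ℤ), |s0 n| ≤ 2 :=
      (hs0lim.abs).eventually_le_const (by norm_num : |(1:ℝ)| < 2)
    have e4 : ∀ᶠ n in (cofinite : Filter ℤ), (X n)^2 / (v0 n)^4 ≤ 2 :=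
      hF0.eventually_le_const (by norm_num : (1:ℝ) < 2)
    have e5 : ∀ᶠ n in (cofinite : Filter ℤ), (X n)^2 / (v1 n)^4 ≤ 2 :=
      hF1.eventually_le_const (by norm_num : (1:ℝ) < 2)
    filter_upwards [e1, e2, e3, e4, e5, hr0b, hr1b] with n h1 h2 h3 h4 h5 h6 h7
    have hX2 : (0:ℝ) ≤ (X n)^2 := sq_nonneg _
    -- (X n)^2 * |r0 n| ≤ 2 * C₀
    have k0 : (X n)^2 * |r0 n| ≤ 2 * C₀ := by
      calc (X n)^2 * |r0 n| ≤ (X n)^2 * (C₀ / (v0 n)^4) :=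
            mul_le_mul_of_nonneg_left h6 hX2
        _ = C₀ * ((X n)^2 / (v0 n)^4) := by ring
        _ ≤ C₀ * 2 := mul_le_mul_of_nonneg_left h4 (le_of_lt hC₀)
        _ = 2 * C₀ := by ring
    have k1 : (X n)^2 * |r1 n| ≤ 2 * C₀ := by
      calc (X n)^2 * |r1 n| ≤ (X n)^2 * (C₀ / (v1 n)^4) :=
            mul_le_mul_of_nonneg_left h7 hX2
        _ = C₀ * ((X n)^2 / (v1 n)^4) := by ring
        _ ≤ C₀ * 2 := mul_le_mul_of_nonneg_left h5 (le_of_lt hC₀)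
        _ = 2 * C₀ := by ring
    have habsA : |(X n)^2 * (r0 n * w1 n)| = (X n)^2 * (|r0 n| * |w1 n|) := by
      rw [abs_mul ((X n)^2) (r0 n * w1 n), abs_mul (r0 n) (w1 n), abs_of_nonneg hX2]
    have habsB : |(X n)^2 * (s0 n * r1 n)| = (X n)^2 * (|s0 n| * |r1 n|) := by
      rw [abs_mul ((X n)^2) (s0 n * r1 n), abs_mul (s0 n) (r1 n), abs_of_nonneg hX2]
    have tri : |N n| ≤ |Nrat n| + (X n)^2 * (|r0 n| * |w1 n|)
        + (X n)^2 * (|s0 n| * |r1 n|) := by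
      rw [hNdec n]
      calc |Nrat n - (X n)^2 * (r0 n * w1 n) - (X n)^2 * (s0 n * r1 n)|
          ≤ |Nrat n - (X n)^2 * (r0 n * w1 n)| + |(X n)^2 * (s0 n * r1 n)| :=
            abs_sub _ _
        _ ≤ |Nrat n| + |(X n)^2 * (r0 n * w1 n)| + |(X n)^2 * (s0 n * r1 n)| := by
            linarith [abs_sub (Nrat n) ((X n)^2 * (r0 n * w1 n))]
        _ = |Nrat n| + (X n)^2 * (|r0 n| * |w1 n|) + (X n)^2 * (|s0 n| * |r1 n|) := by
            rw [habsA, habsB]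
    have q0 : (X n)^2 * (|r0 n| * |w1 n|) ≤ 2 * C₀ * 2 := by
      have := mul_le_mul k0 h2 (abs_nonneg _) (by positivity : (0:ℝ) ≤ 2 * C₀)
      calc (X n)^2 * (|r0 n| * |w1 n|) = ((X n)^2 * |r0 n|) * |w1 n| := by ring
        _ ≤ 2 * C₀ * 2 := this
    have q1 : (X n)^2 * (|s0 n| * |r1 n|) ≤ 2 * (2 * C₀) := by
      have h8 : |s0 n| * ((X n)^2 * |r1 n|) ≤ 2 * (2 * C₀) :=
        mul_le_mul h3 k1 (by positivity) (by norm_num)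
      calc (X n)^2 * (|s0 n| * |r1 n|) = |s0 n| * ((X n)^2 * |r1 n|) := by ring
        _ ≤ 2 * (2 * C₀) := h8
    rw [hCNdef]
    linarith
  -- eventual formula for c
  have hcev : ∀ᶠ n in (cofinite : Filter ℤ),
      c n = g * Real.sqrt ((m n)^2 * ((m n)^2 - 4) / P n) := by
    filter_upwards [habs.eventually_ge_atTop (max R 3)] with n hn
    have h3 : (3:ℝ) ≤ |m n| := le_trans (le_max_right _ _) hn
    have hRm : R ≤ |m n| := le_trans (le_max_left _ _) hn
    have hm24 : (0:ℝ) < (m n)^2 - 4 := by nlinarith [sq_abs (m n), abs_nonneg (m n)]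
    have hA1 : A (m n) = g * |m n| := hAR _ hRm
    have habsprod : |v0 n| * |v1 n| = (m n)^2 - 4 := by
      rw [← abs_mul, hv0m, hv1m,
        show (m n - 2) * (m n + 2) = (m n)^2 - 4 from by ring,
        abs_of_pos hm24]
    have hBB : B (v0 n) * B (v1 n) = P n / ((m n)^2 - 4) := by
      have hPn : P n = (|v0 n| * |v1 n|) * (B (v0 n) * B (v1 n)) := by
        simp only [hPdef, hw0def, hw1def]; ring
      rw [hPn, habsprod, mul_div_cancel_left₀ _ (ne_of_gt hm24)]
    have hcn : c n = A (m n) / Real.sqrt (B (v0 n) * B (v1 n)) := hc n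
    rw [hcn, hA1, hBB]
    have hPn0 : (0:ℝ) ≤ P n := le_of_lt (hPpos n)
    have hmm0 : (0:ℝ) ≤ (m n)^2 * ((m n)^2 - 4) :=
      mul_nonneg (sq_nonneg _) (le_of_lt hm24)
    rw [Real.sqrt_div hPn0, Real.sqrt_div hmm0, Real.sqrt_mul (sq_nonneg _),
      Real.sqrt_sq_eq_abs]
    have hsP : (0:ℝ) < Real.sqrt (P n) := Real.sqrt_pos.2 (hPpos n)
    have hs24 : (0:ℝ) < Real.sqrt ((m n)^2 - 4) := Real.sqrt_pos.2 hm24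
    field_simp
  -- main eventual identity
  have hX1 : ∀ᶠ n in (cofinite : Filter ℤ), (1:ℝ) ≤ X n :=
    hXtop.eventually_ge_atTop 1
  have hmain : ∀ᶠ n in (cofinite : Filter ℤ),
      c n - g * X n
      = g * (N n / P n) * (Real.sqrt ((m n)^2 * ((m n)^2 - 4) / P n) + X n)⁻¹ := by
    filter_upwards [hcev, hX1, hev3] with n h1 h2 h3
    set Q := (m n)^2 * ((m n)^2 - 4) / P n with hQdef
    have hm24 : (0:ℝ) < (m n)^2 - 4 := by nlinarith [sq_abs (m n), abs_nonneg (m n)]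
    have hQ : (0:ℝ) ≤ Q := by
      rw [hQdef]
      exact div_nonneg (mul_nonneg (sq_nonneg _) (le_of_lt hm24)) (le_of_lt (hPpos n))
    have hsq : (0:ℝ) ≤ Real.sqrt Q := Real.sqrt_nonneg _
    have hden : (0:ℝ) < Real.sqrt Q + X n :=
      add_pos_of_nonneg_of_pos hsq (lt_of_lt_of_le one_pos h2)
    have hQX : Q - (X n)^2 = N n / P n := by
      have hPne : P n ≠ 0 := ne_of_gt (hPpos n)
      rw [hQdef]
      simp only [hNdef]
      field_simp
    have key : Real.sqrt Q - X n = (Q - (X n)^2) / (Real.sqrt Q + X n) := by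
      rw [eq_div_iff (ne_of_gt hden)]
      linear_combination Real.mul_self_sqrt hQ
    rw [h1, show g * Real.sqrt Q - g * X n = g * (Real.sqrt Q - X n) from by ring,
      key, hQX]
    rw [div_eq_mul_inv]
    ring
  -- squeeze
  have hPev : ∀ᶠ n in (cofinite : Filter ℤ), (1/2 : ℝ) ≤ P n :=
    hPlim.eventually_const_le (by norm_num : (1/2:ℝ) < 1)
  have hdentop : Tendsto (fun n => Real.sqrt ((m n)^2 * ((m n)^2 - 4) / P n) + X n)
      cofinite atTop :=
    tendsto_atTop_mono (fun n => le_add_of_nonneg_left (Real.sqrt_nonneg _)) hXtop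
  have hinv : Tendsto (fun n => (Real.sqrt ((m n)^2 * ((m n)^2 - 4) / P n) + X n)⁻¹)
      cofinite (𝓝 0) := by
    have h := hdentop.inv_tendsto_atTop
    exact h
  have hbndlim : Tendsto (fun n => g * (2*CN)
      * (Real.sqrt ((m n)^2 * ((m n)^2 - 4) / P n) + X n)⁻¹) cofinite (𝓝 0) := by
    have := hinv.const_mul (g * (2*CN))
    simpa using this
  have hfinal : Tendsto (fun n => c n - g * X n) cofinite (𝓝 0) := by
    refine squeeze_zero_norm' ?_ hbndlim
    filter_upwards [hmain, hNb, hPev, hX1] with n h1 h2 h3 h4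
    rw [Real.norm_eq_abs, h1]
    have hPn := hPpos n
    have hden : (0:ℝ) < Real.sqrt ((m n)^2 * ((m n)^2 - 4) / P n) + X n :=
      add_pos_of_nonneg_of_pos (Real.sqrt_nonneg _) (lt_of_lt_of_le one_pos h4)
    have hCN0 : (0:ℝ) ≤ CN := le_trans (abs_nonneg _) h2
    rw [abs_mul, abs_mul]
    have ha1 : |g| = g := abs_of_pos hg
    have ha3 : |(Real.sqrt ((m n)^2 * ((m n)^2 - 4) / P n) + X n)⁻¹|
        = (Real.sqrt ((m n)^2 * ((m n)^2 - 4) / P n) + X n)⁻¹ :=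
      abs_of_pos (inv_pos.2 hden)
    rw [ha1, ha3]
    have ha2 : |N n / P n| ≤ 2 * CN := by
      rw [abs_div, abs_of_pos hPn]
      calc |N n| / P n ≤ CN / (1/2) :=
            div_le_div₀ hCN0 h2 (by norm_num) h3
        _ = 2 * CN := by ring
    have hinvpos : (0:ℝ) ≤ (Real.sqrt ((m n)^2 * ((m n)^2 - 4) / P n) + X n)⁻¹ :=
      le_of_lt (inv_pos.2 hden)
    calc g * |N n / P n| * (Real.sqrt ((m n)^2 * ((m n)^2 - 4) / P n) + X n)⁻¹
        ≤ g * (2*CN) * (Real.sqrt ((m n)^2 * ((m n)^2 - 4) / P n) + X n)⁻¹ := by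
          apply mul_le_mul_of_nonneg_right _ hinvpos
          exact mul_le_mul_of_nonneg_left ha2 (le_of_lt hg)
      _ = g * (2*CN) * (Real.sqrt ((m n)^2 * ((m n)^2 - 4) / P n) + X n)⁻¹ := rfl
  exact hfinal

end APS8


/-- with Λ̃ = 0, the difference H − H' extends to a compact
continuous linear operator on ℓ²(ℤ, ℂ). -/
theorem aps_difference_is_compact_operator
    (G ε α Λ : ℝ) (hG : 0 < G) (hε : ε ∈ Set.Ioo (0 : ℝ) 4) (hΛ : Λ = 0)
    (A B : ℝ → ℝ)
    (hA : ∃ R > (0 : ℝ), ∀ v : ℝ, R ≤ |v| → A v = 3 * Real.pi * G / 4 * |v|)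
    (hB : ∃ C₀ > (0 : ℝ), ∃ M₀ > (0 : ℝ), ∀ v : ℝ, M₀ ≤ |v| →
      abs (|v| * B v - 1 - α / v ^ 2) ≤ C₀ / v ^ 4)
    (hBpos : ∀ n : ℤ, 0 < B (4 * (n : ℝ) + ε))
    (c d : ℤ → ℝ)
    (hc : ∀ n : ℤ, c n = A (4 * (n : ℝ) + ε + 2) /
      Real.sqrt (B (4 * (n : ℝ) + ε) * B (4 * ((n : ℝ) + 1) + ε)))
    (hd : ∀ n : ℤ, d n = (A (4 * (n : ℝ) + ε + 2) + A (4 * (n : ℝ) + ε - 2)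
      + Λ * |4 * (n : ℝ) + ε|) / B (4 * (n : ℝ) + ε))
    (H : (ℤ → ℂ) → (ℤ → ℂ))
    (hH : ∀ (ψ : ℤ → ℂ) (n : ℤ),
      H ψ n = -(c (n - 1) : ℂ) * ψ (n - 1) - (c n : ℂ) * ψ (n + 1) + (d n : ℂ) * ψ n)
    (H' : (ℤ → ℂ) → (ℤ → ℂ))
    (hH' : ∀ (ψ : ℤ → ℂ) (n : ℤ),
      H' ψ n = (3 * Real.pi * G / 4 : ℂ) *
        (-(((4 * (n : ℝ) + ε - 2) ^ 2 - 2 - α : ℝ) : ℂ) * ψ (n - 1)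
         - (((4 * (n : ℝ) + ε + 2) ^ 2 - 2 - α : ℝ) : ℂ) * ψ (n + 1)
         + ((2 * (4 * (n : ℝ) + ε) ^ 2 - 2 * α : ℝ) : ℂ) * ψ n)) :
    ∃ K : lp (fun _ : ℤ => ℂ) 2 →L[ℂ] lp (fun _ : ℤ => ℂ) 2,
      IsCompactOperator K ∧
      ∀ f : lp (fun _ : ℤ => ℂ) 2, (Function.support (f : ∀ _ : ℤ, ℂ)).Finite →
        ∀ n : ℤ, K f n = H (f : ∀ _ : ℤ, ℂ) n - H' (f : ∀ _ : ℤ, ℂ) n := by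
  subst hΛ
  have hπ := Real.pi_pos
  set u1 : ℤ → ℝ := fun n =>
    3 * Real.pi * G / 4 * ((4 * (n:ℝ) + ε - 2) ^ 2 - 2 - α) - c (n - 1) with hu1def
  set u2 : ℤ → ℝ := fun n =>
    3 * Real.pi * G / 4 * ((4 * (n:ℝ) + ε + 2) ^ 2 - 2 - α) - c n with hu2def
  set u3 : ℤ → ℝ := fun n =>
    d n - 3 * Real.pi * G / 4 * (2 * (4 * (n:ℝ) + ε) ^ 2 - 2 * α) with hu3def
  have ha := APS8.tendsto_a G ε α hG hε A B hA hB hBpos c hc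
  have hu2 : Filter.Tendsto u2 Filter.cofinite (𝓝 0) := by
    have := ha.neg
    simp only [neg_zero, neg_sub] at this
    exact this
  have hu1 : Filter.Tendsto u1 Filter.cofinite (𝓝 0) := by
    have hshift : Filter.Tendsto (fun n : ℤ => n - 1) Filter.cofinite Filter.cofinite := by
      apply Function.Injective.tendsto_cofinite
      intro a b h
      simp only at h
      omega
    have h := hu2.comp hshift
    refine h.congr (fun n => ?_)
    simp only [Function.comp, hu2def, hu1def]
    push_cast
    ring_nf
  have hu3 : Filter.Tendsto u3 Filter.cofinite (𝓝 0) := by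
    have hd0 : ∀ n : ℤ, d n = (A (4 * (n : ℝ) + ε + 2) + A (4 * (n : ℝ) + ε - 2))
        / B (4 * (n : ℝ) + ε) := by
      intro n
      rw [hd n]
      simp only [zero_mul, add_zero]
    exact APS8.tendsto_e G ε α hG hε A B hA hB hBpos d hd0
  obtain ⟨C1, hC1⟩ := APS8.exists_bound_of_tendsto hu1
  obtain ⟨C2, hC2⟩ := APS8.exists_bound_of_tendsto hu2
  obtain ⟨C3, hC3⟩ := APS8.exists_bound_of_tendsto hu3
  refine ⟨APS8.T u1 hC1 (-1) + APS8.T u2 hC2 1 + APS8.T u3 hC3 0, ?_, ?_⟩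
  · have h1 := APS8.isCompactOperator_T hC1 (-1) hu1
    have h2 := APS8.isCompactOperator_T hC2 1 hu2
    have h3 := APS8.isCompactOperator_T hC3 0 hu3
    exact (h1.add h2).add h3
  · intro f _ n
    have hK : ((APS8.T u1 hC1 (-1) + APS8.T u2 hC2 1 + APS8.T u3 hC3 0) f : ∀ _ : ℤ, ℂ) n
        = (u1 n : ℂ) * f (n + -1) + (u2 n : ℂ) * f (n + 1) + (u3 n : ℂ) * f (n + 0) := by
      rw [ContinuousLinearMap.add_apply, ContinuousLinearMap.add_apply,
        lp.coeFn_add, lp.coeFn_add, Pi.add_apply, Pi.add_apply,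
        APS8.T_apply, APS8.T_apply, APS8.T_apply]
    rw [hK, hH, hH']
    have e1 : n + -1 = n - 1 := by ring
    have e2 : n + 0 = n := by ring
    rw [e1, e2]
    simp only [hu1def, hu2def, hu3def]
    push_cast
    ring
end
end

section
/- For every finitely supported ψ : ℤ → ℂ, let g : ℝ → ℂ be the finite trigonometric sum g(x) = ∑_{n∈ℤ} ψ(n)·exp(i(n + ε/4)x). Then for every x ∈ ℝ one has the identity ∑_{n∈ℤ} (H'ψ)(n)·exp(i(n + ε/4)x) = 3πG·[ −16·sin²(x/2)·g''(x) − 8·sin(x)·g'(x) + ( ((α−2)/2)·cos(x) − α/2 )·g(x) ]. (That is, the Fourier transform ℱψ(x) = ∑_n ψ(n)e^{i(n+ε/4)x} intertwines H' with the second-order differential operator H''.) -/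
private lemma aps_expDeriv (μ : ℂ) (x : ℝ) :
    HasDerivAt (fun y : ℝ => Complex.exp (Complex.I * μ * (y : ℂ)))
      (Complex.I * μ * Complex.exp (Complex.I * μ * (x : ℝ))) x := by
  have h1 : HasDerivAt (fun z : ℂ => Complex.I * μ * z) (Complex.I * μ) (x : ℂ) := by
    simpa using (hasDerivAt_id (x : ℂ)).const_mul (Complex.I * μ)
  have h : HasDerivAt (fun z : ℂ => Complex.exp (Complex.I * μ * z))
      (Complex.I * μ * Complex.exp (Complex.I * μ * (x : ℂ))) (x : ℂ) := by
    have h2 := h1.cexp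
    rwa [mul_comm (Complex.exp _)] at h2
  exact h.comp_ofReal

private lemma aps_key (ε α : ℝ) (c p : ℂ) (n : ℤ) (x : ℝ) :
    c * (-(((4 * (((n + 1 : ℤ)) : ℝ) + ε - 2) ^ 2 - 2 - α : ℝ) : ℂ)) * p *
          Complex.exp (Complex.I * (((n + 1 : ℤ) : ℂ) + (ε : ℂ) / 4) * (x : ℂ))
      + c * (-(((4 * (((n - 1 : ℤ)) : ℝ) + ε + 2) ^ 2 - 2 - α : ℝ) : ℂ)) * p *
          Complex.exp (Complex.I * (((n - 1 : ℤ) : ℂ) + (ε : ℂ) / 4) * (x : ℂ))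
      + c * ((2 * (4 * ((n : ℤ) : ℝ) + ε) ^ 2 - 2 * α : ℝ) : ℂ) * p *
          Complex.exp (Complex.I * ((n : ℂ) + (ε : ℂ) / 4) * (x : ℂ))
    = p * ((4 * c) *
        (-16 * (Real.sin (x / 2) : ℂ) ^ 2 *
            (Complex.I * ((n : ℂ) + (ε : ℂ) / 4) * (Complex.I * ((n : ℂ) + (ε : ℂ) / 4) *
              Complex.exp (Complex.I * ((n : ℂ) + (ε : ℂ) / 4) * (x : ℂ))))
         - 8 * (Real.sin x : ℂ) *
            (Complex.I * ((n : ℂ) + (ε : ℂ) / 4) *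
              Complex.exp (Complex.I * ((n : ℂ) + (ε : ℂ) / 4) * (x : ℂ)))
         + ((((α - 2) / 2 : ℝ) : ℂ) * (Real.cos x : ℂ) - ((α : ℂ) / 2)) *
            Complex.exp (Complex.I * ((n : ℂ) + (ε : ℂ) / 4) * (x : ℂ)))) := by
  set A : ℂ := Complex.exp ((x : ℂ) * Complex.I) with hA
  set D : ℂ := Complex.exp (-(x : ℂ) * Complex.I) with hD
  set En : ℂ := Complex.exp (Complex.I * ((n : ℂ) + (ε : ℂ) / 4) * (x : ℂ)) with hEn
  have hEp : Complex.exp (Complex.I * (((n + 1 : ℤ) : ℂ) + (ε : ℂ) / 4) * (x : ℂ)) = En * A := by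
    rw [hEn, hA, ← Complex.exp_add]; congr 1; push_cast; ring
  have hEm : Complex.exp (Complex.I * (((n - 1 : ℤ) : ℂ) + (ε : ℂ) / 4) * (x : ℂ)) = En * D := by
    rw [hEn, hD, ← Complex.exp_add]; congr 1; push_cast; ring
  have hsin : (Real.sin x : ℂ) = (D - A) * Complex.I / 2 := by
    rw [Complex.ofReal_sin]; simp only [Complex.sin, hA, hD]
  have hcos : (Real.cos x : ℂ) = (A + D) / 2 := by
    rw [Complex.ofReal_cos]; simp only [Complex.cos, hA, hD]
  have hhalf : (Real.sin (x / 2) : ℝ) ^ 2 = (1 - Real.cos x) / 2 := by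
    have hc := Real.cos_two_mul' (x / 2)
    have hx : (2 : ℝ) * (x / 2) = x := by ring
    rw [hx] at hc
    have hp := Real.sin_sq_add_cos_sq (x / 2)
    linarith
  have hhalf' : (Real.sin (x / 2) : ℂ) ^ 2 = (2 - A - D) / 4 := by
    calc (Real.sin (x / 2) : ℂ) ^ 2 = ((Real.sin (x / 2) ^ 2 : ℝ) : ℂ) := by push_cast; ring
      _ = (((1 - Real.cos x) / 2 : ℝ) : ℂ) := by rw [hhalf]
      _ = (1 - (Real.cos x : ℂ)) / 2 := by push_cast; ring
      _ = (2 - A - D) / 4 := by rw [hcos]; ring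
  rw [hEp, hEm, hhalf', hsin, hcos]
  push_cast
  ring_nf
  simp only [Complex.I_sq]
  ring

/-- the Fourier transform ψ ↦ ∑ₙ ψ(n)e^{i(n+ε/4)x} intertwines the
simplified APS operator H' with the second-order differential operator H''. -/
theorem aps_fourier_intertwines_simplified_operator
    (G ε α : ℝ) (hG : 0 < G) (hε : ε ∈ Set.Ioo (0 : ℝ) 4)
    (H' : (ℤ → ℂ) → (ℤ → ℂ))
    (hH' : ∀ (ψ : ℤ → ℂ) (n : ℤ),
      H' ψ n = (3 * Real.pi * G / 4 : ℂ) *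
        (-(((4 * (n : ℝ) + ε - 2) ^ 2 - 2 - α : ℝ) : ℂ) * ψ (n - 1)
         - (((4 * (n : ℝ) + ε + 2) ^ 2 - 2 - α : ℝ) : ℂ) * ψ (n + 1)
         + ((2 * (4 * (n : ℝ) + ε) ^ 2 - 2 * α : ℝ) : ℂ) * ψ n)) :
    ∀ ψ : ℤ → ℂ, (Function.support ψ).Finite →
      ∀ x : ℝ,
        (∑' n : ℤ, H' ψ n * Complex.exp (Complex.I * ((n : ℂ) + (ε : ℂ) / 4) * (x : ℂ)))
          = (3 * Real.pi * G : ℂ) *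
            (-16 * (Real.sin (x / 2) : ℂ) ^ 2 *
                deriv (deriv (fun y : ℝ => ∑' n : ℤ,
                  ψ n * Complex.exp (Complex.I * ((n : ℂ) + (ε : ℂ) / 4) * (y : ℂ)))) x
             - 8 * (Real.sin x : ℂ) *
                deriv (fun y : ℝ => ∑' n : ℤ,
                  ψ n * Complex.exp (Complex.I * ((n : ℂ) + (ε : ℂ) / 4) * (y : ℂ))) x
             + ((((α - 2) / 2 : ℝ) : ℂ) * (Real.cos x : ℂ) - ((α : ℂ) / 2)) *
                (∑' n : ℤ, ψ n * Complex.exp (Complex.I * ((n : ℂ) + (ε : ℂ) / 4) * (x : ℂ)))) := by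
  intro ψ hψ x
  classical
  set s : Finset ℤ := hψ.toFinset with hs
  have hψ0 : ∀ n : ℤ, n ∉ s → ψ n = 0 := by
    intro n hn
    by_contra h
    exact hn (hψ.mem_toFinset.mpr h)
  -- rewrite the function under the derivatives as a finite sum
  have hgfun : (fun y : ℝ => ∑' n : ℤ,
        ψ n * Complex.exp (Complex.I * ((n : ℂ) + (ε : ℂ) / 4) * (y : ℂ)))
      = fun y : ℝ => ∑ n ∈ s,
        ψ n * Complex.exp (Complex.I * ((n : ℂ) + (ε : ℂ) / 4) * (y : ℂ)) := by
    funext y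
    exact tsum_eq_sum fun n hn => by rw [hψ0 n hn, zero_mul]
  have hd1 : deriv (fun y : ℝ => ∑ n ∈ s,
        ψ n * Complex.exp (Complex.I * ((n : ℂ) + (ε : ℂ) / 4) * (y : ℂ)))
      = fun y : ℝ => ∑ n ∈ s,
        ψ n * (Complex.I * ((n : ℂ) + (ε : ℂ) / 4) *
          Complex.exp (Complex.I * ((n : ℂ) + (ε : ℂ) / 4) * (y : ℂ))) := by
    funext y
    exact (HasDerivAt.fun_sum fun n _ => (aps_expDeriv _ y).const_mul (ψ n)).deriv
  have hd2 : deriv (fun y : ℝ => ∑ n ∈ s,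
        ψ n * (Complex.I * ((n : ℂ) + (ε : ℂ) / 4) *
          Complex.exp (Complex.I * ((n : ℂ) + (ε : ℂ) / 4) * (y : ℂ))))
      = fun y : ℝ => ∑ n ∈ s,
        ψ n * (Complex.I * ((n : ℂ) + (ε : ℂ) / 4) *
          (Complex.I * ((n : ℂ) + (ε : ℂ) / 4) *
            Complex.exp (Complex.I * ((n : ℂ) + (ε : ℂ) / 4) * (y : ℂ)))) := by
    funext y
    exact (HasDerivAt.fun_sum fun (n : ℤ) _ =>
      (((aps_expDeriv _ y).const_mul (Complex.I * ((n : ℂ) + (ε : ℂ) / 4))).const_mul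
        (ψ n))).deriv
  have h0 : (∑' n : ℤ, ψ n * Complex.exp (Complex.I * ((n : ℂ) + (ε : ℂ) / 4) * (x : ℂ)))
      = ∑ n ∈ s, ψ n * Complex.exp (Complex.I * ((n : ℂ) + (ε : ℂ) / 4) * (x : ℂ)) :=
    tsum_eq_sum fun n hn => by rw [hψ0 n hn, zero_mul]
  -- the three pieces of the operator on the Fourier side
  set F1 : ℤ → ℂ := fun m => (3 * Real.pi * G / 4 : ℂ) *
      (-(((4 * (m : ℝ) + ε - 2) ^ 2 - 2 - α : ℝ) : ℂ)) * ψ (m - 1) *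
      Complex.exp (Complex.I * ((m : ℂ) + (ε : ℂ) / 4) * (x : ℂ)) with hF1
  set F2 : ℤ → ℂ := fun m => (3 * Real.pi * G / 4 : ℂ) *
      (-(((4 * (m : ℝ) + ε + 2) ^ 2 - 2 - α : ℝ) : ℂ)) * ψ (m + 1) *
      Complex.exp (Complex.I * ((m : ℂ) + (ε : ℂ) / 4) * (x : ℂ)) with hF2
  set F3 : ℤ → ℂ := fun m => (3 * Real.pi * G / 4 : ℂ) *
      ((2 * (4 * (m : ℝ) + ε) ^ 2 - 2 * α : ℝ) : ℂ) * ψ m *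
      Complex.exp (Complex.I * ((m : ℂ) + (ε : ℂ) / 4) * (x : ℂ)) with hF3
  have hHl : ∀ n : ℤ,
      H' ψ n * Complex.exp (Complex.I * ((n : ℂ) + (ε : ℂ) / 4) * (x : ℂ))
        = F1 n + F2 n + F3 n := by
    intro n
    simp only [hF1, hF2, hF3]
    rw [hH']
    ring
  have hs1 : Summable F1 := by
    rw [← (Equiv.addRight (1 : ℤ)).summable_iff]
    apply summable_of_ne_finset_zero (s := s)
    intro n hn
    simp only [Function.comp_apply, Equiv.coe_addRight, hF1, add_sub_cancel_right,
      hψ0 n hn, mul_zero, zero_mul]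
  have hs2 : Summable F2 := by
    rw [← (Equiv.subRight (1 : ℤ)).summable_iff]
    apply summable_of_ne_finset_zero (s := s)
    intro n hn
    simp only [Function.comp_apply, Equiv.subRight_apply, hF2, sub_add_cancel,
      hψ0 n hn, mul_zero, zero_mul]
  have hs3 : Summable F3 := by
    apply summable_of_ne_finset_zero (s := s)
    intro n hn
    simp only [hF3, hψ0 n hn, mul_zero, zero_mul]
  have hsplit : (∑' n : ℤ, H' ψ n *
        Complex.exp (Complex.I * ((n : ℂ) + (ε : ℂ) / 4) * (x : ℂ)))
      = (∑' n : ℤ, F1 n) + (∑' n : ℤ, F2 n) + (∑' n : ℤ, F3 n) := by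
    rw [tsum_congr hHl]
    exact (Summable.tsum_add (hs1.add hs2) hs3).trans (by rw [Summable.tsum_add hs1 hs2])
  have e1 : (∑' n : ℤ, F1 n) = ∑ n ∈ s, F1 (n + 1) := by
    rw [← (Equiv.addRight (1 : ℤ)).tsum_eq F1]
    simp only [Equiv.coe_addRight]
    refine tsum_eq_sum fun n hn => ?_
    simp only [hF1, add_sub_cancel_right, hψ0 n hn, mul_zero, zero_mul]
  have e2 : (∑' n : ℤ, F2 n) = ∑ n ∈ s, F2 (n - 1) := by
    rw [← (Equiv.subRight (1 : ℤ)).tsum_eq F2]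
    simp only [Equiv.subRight_apply]
    refine tsum_eq_sum fun n hn => ?_
    simp only [hF2, sub_add_cancel, hψ0 n hn, mul_zero, zero_mul]
  have e3 : (∑' n : ℤ, F3 n) = ∑ n ∈ s, F3 n := by
    refine tsum_eq_sum fun n hn => ?_
    simp only [hF3, hψ0 n hn, mul_zero, zero_mul]
  rw [hgfun, hd1, hd2, h0, hsplit, e1, e2, e3]
  rw [← Finset.sum_add_distrib, ← Finset.sum_add_distrib]
  rw [Finset.mul_sum, Finset.mul_sum, Finset.mul_sum, ← Finset.sum_sub_distrib,
    ← Finset.sum_add_distrib, Finset.mul_sum]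
  refine Finset.sum_congr rfl fun n _ => ?_
  simp only [hF1, hF2, hF3]
  have h1 : n + 1 - 1 = n := by omega
  have h2 : n - 1 + 1 = n := by omega
  rw [h1, h2]
  linear_combination aps_key ε α (3 * Real.pi * G / 4 : ℂ) (ψ n) n x
end
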